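/- arXiv:1910.05089 — 11 statements merged into one kernel-verified Lean document; each statement's English description precedes it below -/
import Mathlib

section
/- Let L be a linear operator (matrix) on a finite-dimensional space decomposed into blocks L_pp, L_pc, L_cp, L_cc with respect to an orthogonal direct sum V = P ⊕ C. If L_pc ∘ L_cc^j ∘ L_cp = 0 for all j < n, then the P-row of L^n has blocks (L^n)_pp = L_pp^n and (L^n)_pc = ∑_{j=1}^{n} L_pp^{j-1} ∘ L_pc ∘ L_cc^{n-j}. -/
/-!
Expanding `Δ * L ^ n = Δ * L ^ (n - 1) * (Δ + (1 - Δ)) * L` block by block, the `P`-row of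
`L ^ n` collects all words in the blocks that start in `P`. The hypothesis kills every word that
returns to `P` after leaving it, so only the words `L_pp ^ (j - 1) * L_pc * L_cc ^ (n - j)`,
which cross from `P` to `C` at most once, survive.
-/

open Finset

section Semiring

variable {A : Type*} [Semiring A] {P Q S : A}

def crossingSum (P Q S : A) (n : ℕ) : A :=
  ∑ j ∈ Icc 1 n, P ^ (j - 1) * Q * S ^ (n - j)

@[simp]
theorem crossingSum_zero (P Q S : A) : crossingSum P Q S 0 = 0 := by
  simp [crossingSum]

theorem crossingSum_succ (P Q S : A) (n : ℕ) :
    crossingSum P Q S (n + 1) = crossingSum P Q S n * S + P ^ n * Q := by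
  rw [crossingSum, sum_Icc_succ_top (by omega), crossingSum, sum_mul, Nat.add_sub_cancel,
    Nat.sub_self, pow_zero, mul_one]
  congr 1
  refine sum_congr rfl fun j hj => ?_
  rw [show n + 1 - j = n - j + 1 by grind, pow_succ, ← mul_assoc]

theorem crossingSum_mul_of_mul_eq {f : A} (hQ : Q * f = Q) (hS : S * f = S) (n : ℕ) :
    crossingSum P Q S n * f = crossingSum P Q S n := by
  induction n with
  | zero => simp
  | succ n ih => rw [crossingSum_succ, add_mul, mul_assoc, hS, mul_assoc, hQ]

theorem crossingSum_mul_eq_zero {R : A} {n : ℕ} (h : ∀ j < n, Q * S ^ j * R = 0) :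
    crossingSum P Q S n * R = 0 := by
  rw [crossingSum, sum_mul]
  refine sum_eq_zero fun j hj => ?_
  rw [mul_assoc, mul_assoc, ← mul_assoc Q, h (n - j) (by grind), mul_zero]

end Semiring

namespace IsIdempotentElem

variable {A : Type*} [Ring A] {e : A}

theorem commute_mul_mul_self (he : IsIdempotentElem e) (L : A) : Commute e (e * L * e) := by
  rw [Commute, SemiconjBy, ← mul_assoc, ← mul_assoc, he.eq, mul_assoc _ e e, he.eq]

theorem crossingSum_mul_one_sub (he : IsIdempotentElem e) (L : A) (n : ℕ) :
    crossingSum (e * L * e) (e * L * (1 - e)) ((1 - e) * L * (1 - e)) n * (1 - e) =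
      crossingSum (e * L * e) (e * L * (1 - e)) ((1 - e) * L * (1 - e)) n :=
  crossingSum_mul_of_mul_eq (by rw [mul_assoc, he.one_sub.eq]) (by rw [mul_assoc, he.one_sub.eq]) n

theorem mul_pow_eq_pow_mul_add_crossingSum (he : IsIdempotentElem e) (L : A) (n : ℕ)
    (h : ∀ j < n, e * L * (1 - e) * ((1 - e) * L * (1 - e)) ^ j * ((1 - e) * L * e) = 0) :
    e * L ^ n = (e * L * e) ^ n * e +
      crossingSum (e * L * e) (e * L * (1 - e)) ((1 - e) * L * (1 - e)) n := by
  set P := e * L * e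
  set Q := e * L * (1 - e)
  set S := (1 - e) * L * (1 - e)
  set R := (1 - e) * L * e
  have split (x : A) : x = x * e + x * (1 - e) := by rw [← mul_add, add_sub_cancel, mul_one]
  have hPe : P * e = P := by rw [mul_assoc, he.eq]
  induction n with
  | zero => simp
  | succ n ih =>
    have hT := he.crossingSum_mul_one_sub L n
    have hTR : crossingSum P Q S n * R = 0 := crossingSum_mul_eq_zero fun j hj => h j (by omega)
    calc e * L ^ (n + 1)
        = P ^ n * (e * L) + crossingSum P Q S n * (1 - e) * L := by
          rw [pow_succ, ← mul_assoc, ih fun j hj => h j (by omega), hT, add_mul, mul_assoc]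
      _ = P ^ n * (P + Q) + crossingSum P Q S n * (R + S) := by
          rw [split (e * L), mul_assoc _ (1 - e), split ((1 - e) * L), mul_add,
            ← mul_assoc, ← mul_assoc]
      _ = P ^ (n + 1) * e + crossingSum P Q S (n + 1) := by
          rw [pow_succ, mul_assoc, hPe, crossingSum_succ, mul_add, mul_add, hTR]
          abel

end IsIdempotentElem

theorem structure_lemma_row_general (V : Type*) [AddCommGroup V] [Module ℂ V]
    (L Δ : Module.End ℂ V) (hΔ : Δ * Δ = Δ) (n : ℕ)
    (h : ∀ j < n, (Δ * L * (1 - Δ)) * ((1 - Δ) * L * (1 - Δ)) ^ j * ((1 - Δ) * L * Δ) = 0) :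
    Δ * L ^ n * Δ = Δ * (Δ * L * Δ) ^ n * Δ ∧
    Δ * L ^ n * (1 - Δ) =
      ∑ j ∈ Finset.Icc 1 n,
        (Δ * L * Δ) ^ (j - 1) * (Δ * L * (1 - Δ)) * ((1 - Δ) * L * (1 - Δ)) ^ (n - j) := by
  have he : IsIdempotentElem Δ := hΔ
  have hrow := he.mul_pow_eq_pow_mul_add_crossingSum L n h
  have hT := he.crossingSum_mul_one_sub L n
  constructor
  · rw [hrow, ((he.commute_mul_mul_self L).pow_right n).eq, add_mul, ← hT,
      mul_assoc _ (1 - Δ), he.one_sub_mul_self, mul_zero, add_zero, mul_assoc, mul_assoc, he.eq]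
  · rw [hrow, add_mul, hT, mul_assoc, he.mul_one_sub_self, mul_zero, zero_add, crossingSum]

/-- If `L_pc ∘ L_cc^j ∘ L_cp = 0` for all `j < n`, then the P-row of `L^n`
has blocks `(L^n)_pp = L_pp^n` and `(L^n)_pc = ∑_{j=1}^n L_pp^{j-1} L_pc L_cc^{n-j}`. -/
theorem structure_lemma_row (V : Type*) [AddCommGroup V] [Module ℂ V] [FiniteDimensional ℂ V]
    (L Δ : Module.End ℂ V) (hΔ : Δ * Δ = Δ) (n : ℕ)
    (h : ∀ j < n, (Δ * L * (1 - Δ)) * ((1 - Δ) * L * (1 - Δ)) ^ j * ((1 - Δ) * L * Δ) = 0) :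
    Δ * L ^ n * Δ = Δ * (Δ * L * Δ) ^ n * Δ ∧
    Δ * L ^ n * (1 - Δ) =
      ∑ j ∈ Finset.Icc 1 n,
        (Δ * L * Δ) ^ (j - 1) * (Δ * L * (1 - Δ)) * ((1 - Δ) * L * (1 - Δ)) ^ (n - j) :=
  structure_lemma_row_general V L Δ hΔ n h
end

section
/- With the same block decomposition, if L_pc ∘ L_cc^j ∘ L_cp = 0 for all j < n, then the P-column of L^n satisfies (L^n)_pp = L_pp^n and (L^n)_cp = ∑_{j=1}^{n} L_cc^{j-1} ∘ L_cp ∘ L_pp^{n-j}. -/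
/-! Splitting `L ^ (n + 1) * Δ = L * (Δ + (1 - Δ)) * L ^ n * Δ` gives a block-triangular
recurrence for the `P`-column of `L ^ n`. The only term feeding `C` back into `P` is
`L_pc * (L ^ n)_cp`, a sum of products `L_pc * L_cc ^ i * L_cp * L_pp ^ k`, which the
hypothesis kills. -/

open Finset

section

variable {R : Type*} [Ring R] {e : R}

theorem IsIdempotentElem.mul_mul_eq_corner_add_corner (he : IsIdempotentElem e) (a L X : R) :
    a * L * X = a * L * e * (e * X) + a * L * (1 - e) * ((1 - e) * X) := by
  rw [← mul_assoc, mul_assoc _ e e, he.eq, ← mul_assoc, mul_assoc _ (1 - e) (1 - e),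
    he.one_sub.eq, ← add_mul, ← mul_add, add_sub_cancel, mul_one]

theorem pow_mul_eq_of_mul_eq {x y : R} (hx : x * e = x) (hy : y * e = y) (n : ℕ) :
    x * y ^ n * e = x * y ^ n := by
  induction n with
  | zero => simpa using hx
  | succ n _ => rw [pow_succ, ← mul_assoc, mul_assoc _ y, hy]

theorem IsIdempotentElem.corner_column_pow (he : IsIdempotentElem e) (L : R) (n : ℕ)
    (h : ∀ j < n, (e * L * (1 - e)) * ((1 - e) * L * (1 - e)) ^ j * ((1 - e) * L * e) = 0) :
    e * L ^ n * e = e * (e * L * e) ^ n * e ∧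
    (1 - e) * L ^ n * e = ∑ i ∈ range n,
      ((1 - e) * L * (1 - e)) ^ i * ((1 - e) * L * e) * (e * L * e) ^ (n - 1 - i) := by
  set P := e * L * e
  set C := (1 - e) * L * (1 - e)
  set B := (1 - e) * L * e
  have hPe : P * e = P := by rw [mul_assoc, he.eq]
  have heP : e * P = P := by simp only [P, ← mul_assoc, he.eq]
  have hBe : B * e = B := by rw [mul_assoc, he.eq]
  induction n with
  | zero => simp [he.eq, he.one_sub_mul_self]
  | succ n ih =>
    have h' : ∀ j < n, e * L * (1 - e) * C ^ j * B = 0 := fun j hj => h j (by omega)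
    obtain ⟨hpp, hcp⟩ := ih h'
    have hstep (a : R) : a * L ^ (n + 1) * e = a * L * e * (e * P ^ n * e) + a * L * (1 - e) *
        ∑ i ∈ range n, C ^ i * B * P ^ (n - 1 - i) := by
      rw [pow_succ', ← mul_assoc, mul_assoc _ (L ^ n), he.mul_mul_eq_corner_add_corner,
        ← mul_assoc e, ← mul_assoc (1 - e), hpp, hcp]
    constructor
    · have hA : e * L * (1 - e) * ∑ i ∈ range n, C ^ i * B * P ^ (n - 1 - i) = 0 :=
        (mul_sum ..).trans <| sum_eq_zero fun i hi => by
          rw [← mul_assoc, ← mul_assoc, h' i (mem_range.mp hi), zero_mul]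
      rw [hstep, hA, add_zero, ← mul_assoc, ← mul_assoc, hPe, ← pow_succ', pow_succ' P,
        ← mul_assoc, heP]
    · have hB : B * (e * P ^ n * e) = B * P ^ n := by
        rw [← mul_assoc, ← mul_assoc, hBe, pow_mul_eq_of_mul_eq hBe hPe]
      rw [hstep, hB, mul_sum, sum_range_succ', add_comm]
      congr 1
      · refine sum_congr rfl fun i _ => ?_
        rw [pow_succ', show n + 1 - 1 - (i + 1) = n - 1 - i by omega]
        simp only [C, mul_assoc]
      · simp

end

theorem Finset.sum_range_eq_sum_Icc_one {M : Type*} [AddCommMonoid M] (f : ℕ → M) (n : ℕ) :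
    ∑ i ∈ range n, f i = ∑ j ∈ Icc 1 n, f (j - 1) := by
  rw [← Ico_add_one_right_eq_Icc, sum_Ico_eq_sum_range]
  simp

theorem structure_lemma_column_general (V : Type*) [AddCommGroup V] [Module ℂ V]
    (L Δ : Module.End ℂ V) (hΔ : Δ * Δ = Δ) (n : ℕ)
    (h : ∀ j < n, (Δ * L * (1 - Δ)) * ((1 - Δ) * L * (1 - Δ)) ^ j * ((1 - Δ) * L * Δ) = 0) :
    Δ * L ^ n * Δ = Δ * (Δ * L * Δ) ^ n * Δ ∧
    (1 - Δ) * L ^ n * Δ =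
      ∑ j ∈ Finset.Icc 1 n,
        ((1 - Δ) * L * (1 - Δ)) ^ (j - 1) * ((1 - Δ) * L * Δ) * (Δ * L * Δ) ^ (n - j) := by
  obtain ⟨hpp, hcp⟩ := IsIdempotentElem.corner_column_pow hΔ L n h
  refine ⟨hpp, hcp.trans ?_⟩
  rw [sum_range_eq_sum_Icc_one]
  refine sum_congr rfl fun j hj => ?_
  rw [show n - 1 - (j - 1) = n - j by grind]

/-- If `L_pc ∘ L_cc^j ∘ L_cp = 0` for all `j < n`, then the P-column of `L^n`
satisfies `(L^n)_pp = L_pp^n` and `(L^n)_cp = ∑_{j=1}^n L_cc^{j-1} L_cp L_pp^{n-j}`. -/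
theorem structure_lemma_column (V : Type*) [AddCommGroup V] [Module ℂ V] [FiniteDimensional ℂ V]
    (L Δ : Module.End ℂ V) (hΔ : Δ * Δ = Δ) (n : ℕ)
    (h : ∀ j < n, (Δ * L * (1 - Δ)) * ((1 - Δ) * L * (1 - Δ)) ^ j * ((1 - Δ) * L * Δ) = 0) :
    Δ * L ^ n * Δ = Δ * (Δ * L * Δ) ^ n * Δ ∧
    (1 - Δ) * L ^ n * Δ =
      ∑ j ∈ Finset.Icc 1 n,
        ((1 - Δ) * L * (1 - Δ)) ^ (j - 1) * ((1 - Δ) * L * Δ) * (Δ * L * Δ) ^ (n - j) :=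
  structure_lemma_column_general V L Δ hΔ n h
end

section
/- If L_pc ∘ L_cc^j ∘ L_cp = 0 for all j ∈ ℕ, then Δ ∘ L^n ∘ Δ⊥ ∘ L^{n'} ∘ Δ = 0 for all n, n' ∈ ℕ. -/
/-!
Write `f = 1 - e`, `C = f L e` and `D = f L f`. Inserting `1 = e + f` after the first factor
gives `f L^(n+1) e = C L^n e + D f L^n e`, so by induction on `n` (generalizing `X`) we get
`X f L^n e = 0` for every `X` with `X D^j C = 0` for all `j`. The mirror statement, read in the
opposite ring, shows that `X = e L^n f` is such an element, because `(e L f) D^i (D^j C) = 0`.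
-/

namespace IsIdempotentElem

variable {R : Type*} [Ring R] {e : R}

theorem mul_one_sub_mul_pow_mul_eq_zero (he : IsIdempotentElem e) (L : R) {X : R}
    (hX : ∀ j : ℕ, X * ((1 - e) * L * (1 - e)) ^ j * ((1 - e) * L * e) = 0) (n : ℕ) :
    X * (1 - e) * L ^ n * e = 0 := by
  induction n generalizing X with
  | zero => rw [pow_zero, mul_one, mul_assoc, he.one_sub_mul_self, mul_zero]
  | succ n ih =>
    set D := (1 - e) * L * (1 - e)
    have hD : X * D * (1 - e) = X * D := by
      simp only [D, mul_assoc, he.one_sub.eq]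
    have hXD : ∀ j : ℕ, X * D * D ^ j * ((1 - e) * L * e) = 0 := fun j => by
      rw [mul_assoc X, ← pow_succ', hX]
    calc X * (1 - e) * L ^ (n + 1) * e
        = X * D ^ 0 * ((1 - e) * L * e) * (L ^ n * e) + X * D * (1 - e) * L ^ n * e := by
          rw [hD, pow_succ']; simp only [D]; noncomm_ring
      _ = 0 := by rw [hX 0, ih hXD, zero_mul, zero_add]

theorem mul_pow_mul_one_sub_mul_eq_zero (he : IsIdempotentElem e) (L : R) {Y : R}
    (hY : ∀ j : ℕ, (e * L * (1 - e)) * ((1 - e) * L * (1 - e)) ^ j * Y = 0) (n : ℕ) :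
    e * L ^ n * (1 - e) * Y = 0 := by
  have he_op : IsIdempotentElem (MulOpposite.op e) := congrArg MulOpposite.op he
  apply MulOpposite.op_injective
  simpa [mul_assoc] using he_op.mul_one_sub_mul_pow_mul_eq_zero (MulOpposite.op L)
    (X := MulOpposite.op Y) (fun j => MulOpposite.unop_injective <| by simpa [mul_assoc] using hY j) n

theorem mul_pow_mul_one_sub_mul_pow_mul_eq_zero (he : IsIdempotentElem e) (L : R)
    (h : ∀ j : ℕ, (e * L * (1 - e)) * ((1 - e) * L * (1 - e)) ^ j * ((1 - e) * L * e) = 0)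
    (n m : ℕ) : e * L ^ n * (1 - e) * L ^ m * e = 0 := by
  set D := (1 - e) * L * (1 - e)
  set C := (1 - e) * L * e
  have hleft : ∀ j : ℕ, e * L ^ n * (1 - e) * (D ^ j * C) = 0 := fun j =>
    he.mul_pow_mul_one_sub_mul_eq_zero L
      (fun i => by rw [← mul_assoc, mul_assoc _ (D ^ i), ← pow_add, h]) n
  calc e * L ^ n * (1 - e) * L ^ m * e = e * L ^ n * (1 - e) * (1 - e) * L ^ m * e := by
        rw [mul_assoc (e * L ^ n) (1 - e) (1 - e), he.one_sub.eq]
    _ = 0 := he.mul_one_sub_mul_pow_mul_eq_zero L (fun j => by rw [mul_assoc, hleft]) m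

end IsIdempotentElem

theorem ncgd_forwards_general (V : Type*) [AddCommGroup V] [Module ℂ V]
    (L Δ : Module.End ℂ V) (hΔ : Δ * Δ = Δ)
    (h : ∀ j : ℕ, (Δ * L * (1 - Δ)) * ((1 - Δ) * L * (1 - Δ)) ^ j * ((1 - Δ) * L * Δ) = 0) :
    ∀ n n' : ℕ, Δ * L ^ n * (1 - Δ) * L ^ n' * Δ = 0 :=
  IsIdempotentElem.mul_pow_mul_one_sub_mul_pow_mul_eq_zero hΔ L h

/-- If `L_pc ∘ L_cc^j ∘ L_cp = 0` for all `j ∈ ℕ`, then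
`Δ ∘ L^n ∘ Δ⊥ ∘ L^{n'} ∘ Δ = 0` for all `n, n' ∈ ℕ`. -/
theorem ncgd_forwards (V : Type*) [AddCommGroup V] [Module ℂ V] [FiniteDimensional ℂ V]
    (L Δ : Module.End ℂ V) (hΔ : Δ * Δ = Δ)
    (h : ∀ j : ℕ, (Δ * L * (1 - Δ)) * ((1 - Δ) * L * (1 - Δ)) ^ j * ((1 - Δ) * L * Δ) = 0) :
    ∀ n n' : ℕ, Δ * L ^ n * (1 - Δ) * L ^ n' * Δ = 0 :=
  ncgd_forwards_general V L Δ hΔ h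
end

section
/- If Δ ∘ L^n ∘ Δ⊥ ∘ L ∘ Δ = 0 for all n ∈ ℕ, then L_pc ∘ L_cc^j ∘ L_cp = 0 for all j ∈ ℕ. -/
/-! With `q = 1 - p`, writing `q a = a - p a` lets one trade a factor `q a` for one
more power of `a` at the cost of a term `p aⁿ p · (p a (q a)ʲ q a p)`, so induction on `j` (for all
exponents `n` at once) shows `p aⁿ (q a)ʲ q a p = 0`. Since `q (q a q)ʲ = (q a)ʲ q`, the compressed
product `(p a q) (q a q)ʲ (q a p)` is the case `n = 1`. -/

namespace IsIdempotentElem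

variable {R : Type*} [Ring R] {p a : R}

theorem one_sub_mul_corner_pow (hp : IsIdempotentElem p) (j : ℕ) :
    (1 - p) * ((1 - p) * a * (1 - p)) ^ j = ((1 - p) * a) ^ j * (1 - p) := by
  refine SemiconjBy.pow_right ?_ j
  rw [SemiconjBy, ← mul_assoc, ← mul_assoc, hp.one_sub.eq]

theorem mul_pow_mul_one_sub_mul_pow_eq_zero (hp : IsIdempotentElem p)
    (h : ∀ n : ℕ, p * a ^ n * (1 - p) * a * p = 0) (j : ℕ) :
    ∀ n : ℕ, p * a ^ n * ((1 - p) * a) ^ j * (1 - p) * a * p = 0 := by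
  induction j with
  | zero => simpa using h
  | succ j ih =>
    intro n
    have trade : p * a ^ n * ((1 - p) * a) ^ (j + 1) * (1 - p) * a * p =
        p * a ^ (n + 1) * ((1 - p) * a) ^ j * (1 - p) * a * p -
          p * a ^ n * (p * p) * a * ((1 - p) * a) ^ j * (1 - p) * a * p := by
      rw [pow_succ' _ j, pow_succ, hp.eq]
      noncomm_ring
    have split : p * a ^ n * (p * p) * a * ((1 - p) * a) ^ j * (1 - p) * a * p =
        p * a ^ n * p * (p * a ^ 1 * ((1 - p) * a) ^ j * (1 - p) * a * p) := by
      simp only [pow_one, mul_assoc]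
    rw [trade, split, ih, ih, mul_zero, sub_zero]

theorem corner_mul_corner_pow_mul_corner_eq_zero (hp : IsIdempotentElem p)
    (h : ∀ n : ℕ, p * a ^ n * (1 - p) * a * p = 0) (j : ℕ) :
    p * a * (1 - p) * ((1 - p) * a * (1 - p)) ^ j * ((1 - p) * a * p) = 0 := by
  calc p * a * (1 - p) * ((1 - p) * a * (1 - p)) ^ j * ((1 - p) * a * p)
      = p * a * ((1 - p) * ((1 - p) * a * (1 - p)) ^ j * (1 - p)) * a * p := by
        simp only [mul_assoc]
    _ = p * a ^ 1 * ((1 - p) * a) ^ j * (1 - p) * a * p := by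
        rw [hp.one_sub_mul_corner_pow, pow_one, mul_assoc _ (1 - p) (1 - p), hp.one_sub.eq]
        simp only [mul_assoc]
    _ = 0 := hp.mul_pow_mul_one_sub_mul_pow_eq_zero h j 1

end IsIdempotentElem

theorem ncgd_backwards_general (V : Type*) [AddCommGroup V] [Module ℂ V]
    (L Δ : Module.End ℂ V) (hΔ : Δ * Δ = Δ)
    (h : ∀ n : ℕ, Δ * L ^ n * (1 - Δ) * L * Δ = 0) :
    ∀ j : ℕ, (Δ * L * (1 - Δ)) * ((1 - Δ) * L * (1 - Δ)) ^ j * ((1 - Δ) * L * Δ) = 0 :=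
  IsIdempotentElem.corner_mul_corner_pow_mul_corner_eq_zero hΔ h

/-- If `Δ ∘ L^n ∘ Δ⊥ ∘ L ∘ Δ = 0` for all `n ∈ ℕ`, then
`L_pc ∘ L_cc^j ∘ L_cp = 0` for all `j ∈ ℕ`. -/
theorem ncgd_backwards (V : Type*) [AddCommGroup V] [Module ℂ V] [FiniteDimensional ℂ V]
    (L Δ : Module.End ℂ V) (hΔ : Δ * Δ = Δ)
    (h : ∀ n : ℕ, Δ * L ^ n * (1 - Δ) * L * Δ = 0) :
    ∀ j : ℕ, (Δ * L * (1 - Δ)) * ((1 - Δ) * L * (1 - Δ)) ^ j * ((1 - Δ) * L * Δ) = 0 :=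
  ncgd_backwards_general V L Δ hΔ h
end

section
/- For a linear map L on a finite-dimensional space with block decomposition as above, the following are equivalent: (i) Δ ∘ L^n ∘ Δ⊥ ∘ L^{n'} ∘ Δ = 0 for all n, n' ∈ ℕ; (ii) L_pc ∘ L_cc^j ∘ L_cp = 0 for all j ∈ ℕ. -/
/-!
Write `B = e L (1 - e)`, `D = (1 - e) L (1 - e)` and `C = (1 - e) L e` for an idempotent `e`.
Inserting `1 = e + (1 - e)` before the last factor of `L ^ (n + 1)` gives
`e L ^ (n + 1) (1 - e) = ∑_{a + b = n} (e L ^ a e) B D ^ b`. Multiplying on the right by `L e`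
makes `e L ^ (j + 1) (1 - e) L e` a triangular combination of the `B D ^ b C`, `b ≤ j`, whose
leading coefficient is `e`, so the first condition gives the second by strong induction.
Conversely, if every `B D ^ j C` vanishes, inserting `1 = e + (1 - e)` after the first factor of
`L ^ (m + 1)` shows `B D ^ b L ^ m e = 0` for all `b` and `m`.
-/

open Finset

namespace IsIdempotentElem

variable {R : Type*} [Ring R] {e : R}

lemma mul_pow_succ_mul_one_sub (he : IsIdempotentElem e) (L : R) (n : ℕ) :
    e * L ^ (n + 1) * (1 - e) = ∑ p ∈ antidiagonal n,
      e * L ^ p.1 * e * (e * L * (1 - e)) * ((1 - e) * L * (1 - e)) ^ p.2 := by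
  induction n with
  | zero => simp [mul_assoc, he.mul_self_mul]
  | succ n ih =>
    have hsplit : e * L ^ (n + 2) * (1 - e) =
        e * L ^ (n + 1) * e * (e * L * (1 - e)) +
          e * L ^ (n + 1) * (1 - e) * ((1 - e) * L * (1 - e)) := calc
      _ = e * L ^ (n + 1) * (e + (1 - e)) * L * (1 - e) := by
        simp only [add_sub_cancel, mul_one, pow_succ, mul_assoc]
      _ = _ := by
        simp only [mul_add, add_mul, mul_assoc, he.mul_self_mul, he.one_sub.mul_self_mul]
    rw [hsplit, ih, Nat.sum_antidiagonal_succ', sum_mul]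
    simp only [pow_zero, mul_one, pow_succ, mul_assoc]

lemma mul_corner_pow_mul_one_sub (he : IsIdempotentElem e) (L : R) (b : ℕ) :
    e * L * (1 - e) * ((1 - e) * L * (1 - e)) ^ b * (1 - e) =
      e * L * (1 - e) * ((1 - e) * L * (1 - e)) ^ b := by
  cases b with
  | zero => simp [mul_assoc, he.one_sub.eq]
  | succ b => simp [pow_succ, mul_assoc, he.one_sub.eq]

lemma mul_pow_succ_mul_one_sub_mul_mul (he : IsIdempotentElem e) (L : R) (j : ℕ) :
    e * L ^ (j + 1) * (1 - e) * L * e = ∑ p ∈ antidiagonal j,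
      e * L ^ p.1 * e *
        (e * L * (1 - e) * ((1 - e) * L * (1 - e)) ^ p.2 * ((1 - e) * L * e)) := by
  rw [he.mul_pow_succ_mul_one_sub, sum_mul, sum_mul]
  refine sum_congr rfl fun p _ => ?_
  calc _ = e * L ^ p.1 * e *
        (e * L * (1 - e) * ((1 - e) * L * (1 - e)) ^ p.2 * (1 - e) * L * e) := by
        rw [he.mul_corner_pow_mul_one_sub]
        simp only [mul_assoc]
    _ = _ := by simp only [mul_assoc]

lemma corner_mul_pow_mul_eq_zero_of_forall (he : IsIdempotentElem e) {L : R}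
    (h : ∀ n n' : ℕ, e * L ^ n * (1 - e) * L ^ n' * e = 0) (j : ℕ) :
    e * L * (1 - e) * ((1 - e) * L * (1 - e)) ^ j * ((1 - e) * L * e) = 0 := by
  induction j using Nat.strong_induction_on with
  | _ j ih =>
    have hsum := h (j + 1) 1
    rw [pow_one, he.mul_pow_succ_mul_one_sub_mul_mul, sum_eq_single (0, j)] at hsum
    · simpa only [pow_zero, mul_one, mul_assoc, he.mul_self_mul] using hsum
    · intro p hp hne
      rw [HasAntidiagonal.mem_antidiagonal] at hp
      have hfst : p.1 ≠ 0 := fun h0 => hne (Prod.ext h0 (by simp only; omega))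
      rw [ih p.2 (by omega), mul_zero]
    · simp

lemma corner_mul_pow_mul_pow_mul_eq_zero (he : IsIdempotentElem e) {L : R}
    (h : ∀ j : ℕ, e * L * (1 - e) * ((1 - e) * L * (1 - e)) ^ j * ((1 - e) * L * e) = 0)
    (m b : ℕ) : e * L * (1 - e) * ((1 - e) * L * (1 - e)) ^ b * L ^ m * e = 0 := by
  induction m generalizing b with
  | zero =>
    rw [pow_zero, mul_one, ← he.mul_corner_pow_mul_one_sub, mul_assoc, he.one_sub_mul_self,
      mul_zero]
  | succ m ih =>
    calc _ = e * L * (1 - e) * ((1 - e) * L * (1 - e)) ^ b * (1 - e) * L * (e + (1 - e)) *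
          L ^ m * e := by
          rw [he.mul_corner_pow_mul_one_sub, add_sub_cancel, mul_one, pow_succ']
          simp only [mul_assoc]
      _ = e * L * (1 - e) * ((1 - e) * L * (1 - e)) ^ b * ((1 - e) * L * e) * L ^ m * e +
          e * L * (1 - e) * ((1 - e) * L * (1 - e)) ^ (b + 1) * L ^ m * e := by
          simp only [mul_add, add_mul, pow_succ, mul_assoc]
      _ = 0 := by rw [h, ih, zero_mul, zero_mul, add_zero]

theorem mul_pow_mul_one_sub_mul_pow_mul_eq_zero_iff (he : IsIdempotentElem e) (L : R) :
    (∀ n n' : ℕ, e * L ^ n * (1 - e) * L ^ n' * e = 0) ↔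
      ∀ j : ℕ, e * L * (1 - e) * ((1 - e) * L * (1 - e)) ^ j * ((1 - e) * L * e) = 0 := by
  refine ⟨he.corner_mul_pow_mul_eq_zero_of_forall, fun h n n' => ?_⟩
  cases n with
  | zero => rw [pow_zero, mul_one, he.mul_one_sub_self, zero_mul, zero_mul]
  | succ n =>
    rw [he.mul_pow_succ_mul_one_sub, sum_mul, sum_mul]
    refine sum_eq_zero fun p _ => ?_
    calc _ = e * L ^ p.1 * e *
          (e * L * (1 - e) * ((1 - e) * L * (1 - e)) ^ p.2 * L ^ n' * e) := by
          simp only [mul_assoc]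
      _ = 0 := by rw [he.corner_mul_pow_mul_pow_mul_eq_zero h, mul_zero]

end IsIdempotentElem

theorem ncgd_iff_powers_general (V : Type*) [AddCommGroup V] [Module ℂ V]
    (L Δ : Module.End ℂ V) (hΔ : Δ * Δ = Δ) :
    (∀ n n' : ℕ, Δ * L ^ n * (1 - Δ) * L ^ n' * Δ = 0) ↔
    (∀ j : ℕ, (Δ * L * (1 - Δ)) * ((1 - Δ) * L * (1 - Δ)) ^ j * ((1 - Δ) * L * Δ) = 0) :=
  IsIdempotentElem.mul_pow_mul_one_sub_mul_pow_mul_eq_zero_iff hΔ L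

/-- Equivalence: `Δ L^n Δ⊥ L^{n'} Δ = 0` for all `n, n'` iff
`L_pc L_cc^j L_cp = 0` for all `j ∈ ℕ`. -/
theorem ncgd_iff_powers (V : Type*) [AddCommGroup V] [Module ℂ V] [FiniteDimensional ℂ V]
    (L Δ : Module.End ℂ V) (hΔ : Δ * Δ = Δ) :
    (∀ n n' : ℕ, Δ * L ^ n * (1 - Δ) * L ^ n' * Δ = 0) ↔
    (∀ j : ℕ, (Δ * L * (1 - Δ)) * ((1 - Δ) * L * (1 - Δ)) ^ j * ((1 - Δ) * L * Δ) = 0) :=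
  ncgd_iff_powers_general V L Δ hΔ
end

section
/- Let L be a linear operator on a finite-dimensional real or complex vector space V = P ⊕ C with projection Δ onto P. Then Δ ∘ exp(tL) ∘ Δ⊥ ∘ exp(τL) ∘ Δ = 0 for all t, τ ≥ 0 if and only if Δ ∘ L^n ∘ Δ⊥ ∘ L^{n'} ∘ Δ = 0 for all n, n' ∈ ℕ. -/
/-!
Both directions work one exponential at a time. If every `A * x ^ m * B` vanishes, so does every
term of the series `A * exp x * B`. Conversely, if `τ ↦ A * exp (τ • x) * x ^ n * B` vanishes on
`[0, ∞)`, so does its derivative there (a one-sided derivative already determines it), and that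
derivative is the same expression with `n + 1`; evaluating at `τ = 0` gives `A * x ^ n * B = 0`.
-/

open NormedSpace Set

theorem HasDerivAt.eq_zero_of_eqOn_Ici {E : Type*} [NormedAddCommGroup E] [NormedSpace ℝ E]
    {f : ℝ → E} {f' : E} {a x : ℝ} (hf : EqOn f 0 (Ici a)) (hx : a ≤ x)
    (h : HasDerivAt f f' x) : f' = 0 := by
  have hzero : HasDerivWithinAt f 0 (Ici x) x :=
    (hasDerivWithinAt_const x (Ici x) (0 : E)).congr
      (fun y hy => hf (hx.trans hy)) (hf hx)
  exact (uniqueDiffWithinAt_Ici x).eq_deriv _ h.hasDerivWithinAt hzero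

section

variable {𝔸 : Type*} [NormedRing 𝔸] [CompleteSpace 𝔸]

theorem mul_exp_mul_eq_zero_of_forall_pow {𝕂 : Type*} [RCLike 𝕂] [NormedAlgebra 𝕂 𝔸]
    {A B x : 𝔸} (h : ∀ m : ℕ, A * x ^ m * B = 0) : A * exp x * B = 0 := by
  have hsum := ((exp_series_hasSum_exp' (𝕂 := 𝕂) x).mul_left A).mul_right B
  have hterm : ∀ m : ℕ, A * ((m.factorial⁻¹ : 𝕂) • x ^ m) * B = 0 := fun m => by
    rw [mul_smul_comm, smul_mul_assoc, h m, smul_zero]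
  simp only [hterm] at hsum
  exact hsum.unique hasSum_zero

theorem mul_exp_smul_mul_eq_zero_of_forall_pow {𝕂 : Type*} [RCLike 𝕂] [NormedAlgebra 𝕂 𝔸]
    {A B x : 𝔸} (h : ∀ m : ℕ, A * x ^ m * B = 0) (t : 𝕂) : A * exp (t • x) * B = 0 :=
  mul_exp_mul_eq_zero_of_forall_pow (𝕂 := 𝕂) fun m => by
    rw [smul_pow, mul_smul_comm, smul_mul_assoc, h m, smul_zero]

variable [NormedAlgebra ℝ 𝔸]

theorem mul_pow_mul_eq_zero_of_forall_exp_smul {A B x : 𝔸}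
    (h : ∀ τ : ℝ, 0 ≤ τ → A * exp (τ • x) * B = 0) (n : ℕ) : A * x ^ n * B = 0 := by
  suffices hvanish : ∀ n : ℕ, EqOn (fun τ : ℝ => A * (exp (τ • x) * x ^ n) * B) 0 (Ici 0) by
    simpa using hvanish n (self_mem_Ici (a := (0 : ℝ)))
  intro n
  induction n with
  | zero => simpa [EqOn] using h
  | succ n ih =>
    intro τ hτ
    have hderiv : HasDerivAt (fun u : ℝ => A * (exp (u • x) * x ^ n) * B)
        (A * (exp (τ • x) * x ^ (n + 1)) * B) τ := by
      rw [pow_succ', ← mul_assoc (exp (τ • x))]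
      exact (((hasDerivAt_exp_smul_const x τ).mul_const (x ^ n)).const_mul A).mul_const B
    exact hderiv.eq_zero_of_eqOn_Ici ih hτ

end

theorem ncgd_exp_iff_powers_general (d : ℕ)
    (L Δ : EuclideanSpace ℂ (Fin d) →L[ℂ] EuclideanSpace ℂ (Fin d)) :
    (∀ t τ : ℝ, 0 ≤ t → 0 ≤ τ →
      Δ * NormedSpace.exp (t • L) * (1 - Δ) * NormedSpace.exp (τ • L) * Δ = 0) ↔
    (∀ n n' : ℕ, Δ * L ^ n * (1 - Δ) * L ^ n' * Δ = 0) := by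
  constructor
  · intro h n n'
    have hright : ∀ t : ℝ, 0 ≤ t → Δ * exp (t • L) * ((1 - Δ) * L ^ n' * Δ) = 0 :=
      fun t ht => by
        simpa only [mul_assoc] using
          mul_pow_mul_eq_zero_of_forall_exp_smul (h t · ht ·) n'
    simpa only [mul_assoc] using mul_pow_mul_eq_zero_of_forall_exp_smul hright n
  · intro h t τ _ _
    refine mul_exp_smul_mul_eq_zero_of_forall_pow (fun m => ?_) τ
    have hleft : Δ * exp (t • L) * ((1 - Δ) * L ^ m * Δ) = 0 :=
      mul_exp_smul_mul_eq_zero_of_forall_pow (fun k => by simpa only [mul_assoc] using h k m) t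
    simpa only [mul_assoc] using hleft

/-- `Δ exp(tL) Δ⊥ exp(τL) Δ = 0` for all `t, τ ≥ 0` iff
`Δ L^n Δ⊥ L^{n'} Δ = 0` for all `n, n' ∈ ℕ`. -/
theorem ncgd_exp_iff_powers (d : ℕ)
    (L Δ : EuclideanSpace ℂ (Fin d) →L[ℂ] EuclideanSpace ℂ (Fin d)) (hΔ : Δ * Δ = Δ) :
    (∀ t τ : ℝ, 0 ≤ t → 0 ≤ τ →
      Δ * NormedSpace.exp (t • L) * (1 - Δ) * NormedSpace.exp (τ • L) * Δ = 0) ↔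
    (∀ n n' : ℕ, Δ * L ^ n * (1 - Δ) * L ^ n' * Δ = 0) :=
  ncgd_exp_iff_powers_general d L Δ
end

section
/- Semigroup NCGD characterization: for a linear generator L on a finite-dimensional space with dim C = ℓ, the dynamics E_t = exp(tL) satisfies Δ ∘ E_{t} ∘ Δ ∘ E_{τ} ∘ Δ = Δ ∘ E_{t+τ} ∘ Δ for all t, τ ≥ 0 if and only if L_pc ∘ L_cc^j ∘ L_cp = 0 for all j ∈ {0, …, ℓ − 1}. -/
set_option maxHeartbeats 1000000
set_option synthInstance.maxHeartbeats 400000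

section RingLemmas

variable {R : Type*} [Ring R] (Δ Q L : R)

/-- split identity -/
lemma ncgd_split (hsum : Δ + Q = 1) (n : ℕ) :
    Q * (L ^ (n + 1) * Δ) = Q * (L * (Δ * (L ^ n * Δ))) + Q * (L * (Q * (L ^ n * Δ))) := by
  have h1 : Δ * (L ^ n * Δ) + Q * (L ^ n * Δ) = L ^ n * Δ := by
    rw [← add_mul, hsum, one_mul]
  calc Q * (L ^ (n + 1) * Δ) = Q * (L * (L ^ n * Δ)) := by rw [pow_succ', mul_assoc]
    _ = Q * (L * (Δ * (L ^ n * Δ) + Q * (L ^ n * Δ))) := by rw [h1]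
    _ = _ := by rw [mul_add, mul_add]

variable (hΔ : Δ * Δ = Δ) (hsum : Δ + Q = 1)

section
include hΔ hsum

lemma ncgd_QQ : Q * Q = Q := by
  have h : Q = 1 - Δ := by rw [← hsum]; abel
  rw [h]; noncomm_ring [hΔ]

lemma ncgd_QΔ : Q * Δ = 0 := by
  have h : Q = 1 - Δ := by rw [← hsum]; abel
  rw [h]; noncomm_ring [hΔ]

lemma ncgd_ΔQ : Δ * Q = 0 := by
  have h : Q = 1 - Δ := by rw [← hsum]; abel
  rw [h]; noncomm_ring [hΔ]

lemma ncgd_QQ' (x : R) : Q * (Q * x) = Q * x := by rw [← mul_assoc, ncgd_QQ Δ Q hΔ hsum]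
lemma ncgd_QΔ' (x : R) : Q * (Δ * x) = 0 := by rw [← mul_assoc, ncgd_QΔ Δ Q hΔ hsum, zero_mul]
lemma ncgd_ΔQ' (x : R) : Δ * (Q * x) = 0 := by rw [← mul_assoc, ncgd_ΔQ Δ Q hΔ hsum, zero_mul]

variable {M : R} (hM : M = Q * L * Q)
include hM

lemma ncgd_mM (x : R) : M * (Q * x) = Q * (L * (Q * x)) := by
  rw [hM, mul_assoc, mul_assoc, ncgd_QQ' Δ Q hΔ hsum x]

lemma ncgd_qM (j : ℕ) (x : R) : Q * (M ^ j * (Q * x)) = M ^ j * (Q * x) := by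
  induction j generalizing x with
  | zero => simp [ncgd_QQ' Δ Q hΔ hsum]
  | succ j ih =>
    rw [pow_succ, mul_assoc, ncgd_mM Δ Q L hΔ hsum hM x]
    exact ih _

/-- C(n): from the `T j` vanishing, the `Y j n` vanish. -/
lemma ncgd_C (hT : ∀ j : ℕ, Δ * (L * (Q * (M ^ j * (Q * (L * Δ))))) = 0) :
    ∀ n j : ℕ, Δ * (L * (Q * (M ^ j * (Q * (L ^ n * Δ))))) = 0 := by
  intro n
  induction n with
  | zero => intro j; simp [ncgd_QΔ Δ Q hΔ hsum]
  | succ n ih =>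
    intro j
    rw [ncgd_split Δ Q L hsum n]
    simp only [mul_add]
    have h1 : Δ * (L * (Q * (M ^ j * (Q * (L * (Δ * (L ^ n * Δ))))))) =
        (Δ * (L * (Q * (M ^ j * (Q * (L * Δ)))))) * (L ^ n * Δ) := by
      simp only [mul_assoc]
    have h2 : M ^ j * (Q * (L * (Q * (L ^ n * Δ)))) = M ^ (j + 1) * (Q * (L ^ n * Δ)) := by
      rw [← ncgd_mM Δ Q L hΔ hsum hM (L ^ n * Δ), pow_succ, mul_assoc]
    rw [h1, hT j, zero_mul, h2, ih (j + 1), add_zero]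

/-- D(m): general vanishing. -/
lemma ncgd_D (hT : ∀ j : ℕ, Δ * (L * (Q * (M ^ j * (Q * (L * Δ))))) = 0) :
    ∀ m j n : ℕ, Δ * (L ^ m * (Q * (M ^ j * (Q * (L ^ n * Δ))))) = 0 := by
  intro m
  induction m with
  | zero => intro j n; simp [ncgd_ΔQ' Δ Q hΔ hsum]
  | succ m ih =>
    intro j n
    have hsplit : L ^ (m + 1) * (Q * (M ^ j * (Q * (L ^ n * Δ)))) =
        L ^ m * (Δ * (L * (Q * (M ^ j * (Q * (L ^ n * Δ)))))) +
        L ^ m * (Q * (L * (Q * (M ^ j * (Q * (L ^ n * Δ)))))) := by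
      have hone : Δ * (L * (Q * (M ^ j * (Q * (L ^ n * Δ))))) +
          Q * (L * (Q * (M ^ j * (Q * (L ^ n * Δ))))) =
          L * (Q * (M ^ j * (Q * (L ^ n * Δ)))) := by
        rw [← add_mul, hsum, one_mul]
      rw [← mul_add, hone, pow_succ, mul_assoc]
    rw [hsplit, mul_add]
    -- first summand
    rw [ncgd_C Δ Q L hΔ hsum hM hT n j, mul_zero, mul_zero, zero_add]
    -- second summand
    have hq : Q * (M ^ j * (Q * (L ^ n * Δ))) = Q * (Q * (M ^ j * (Q * (L ^ n * Δ)))) := by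
      rw [ncgd_QQ' Δ Q hΔ hsum]
    have h2 : Q * (L * (Q * (M ^ j * (Q * (L ^ n * Δ))))) =
        Q * (M ^ (j + 1) * (Q * (L ^ n * Δ))) := by
      rw [← ncgd_mM Δ Q L hΔ hsum hM (M ^ j * (Q * (L ^ n * Δ))),
        ncgd_qM Δ Q L hΔ hsum hM j, ncgd_qM Δ Q L hΔ hsum hM (j + 1),
        pow_succ', mul_assoc]
    rw [h2]
    exact ih (j + 1) n

/-- from T to S -/
lemma ncgd_T_to_S (hT : ∀ j : ℕ, Δ * (L * (Q * (M ^ j * (Q * (L * Δ))))) = 0) :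
    ∀ m n : ℕ, Δ * (L ^ m * (Q * (L ^ n * Δ))) = 0 := by
  intro m n
  have := ncgd_D Δ Q L hΔ hsum hM hT m 0 n
  rwa [pow_zero, one_mul, ncgd_QQ' Δ Q hΔ hsum] at this

/-- from S to T -/
lemma ncgd_S_to_T (hS : ∀ m n : ℕ, Δ * (L ^ m * (Q * (L ^ n * Δ))) = 0) :
    ∀ j : ℕ, Δ * (L * (Q * (M ^ j * (Q * (L * Δ))))) = 0 := by
  have hX : ∀ j n : ℕ, Δ * (L * (Q * (M ^ j * (Q * (L ^ n * Δ))))) = 0 := by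
    intro j
    induction j with
    | zero =>
      intro n
      have := hS 1 n
      rw [pow_one] at this
      simpa [ncgd_QQ' Δ Q hΔ hsum] using this
    | succ j ih =>
      intro n
      have key := ncgd_split Δ Q L hsum n
      have expand : Δ * (L * (Q * (M ^ j * (Q * (L ^ (n+1) * Δ))))) =
          (Δ * (L * (Q * (M ^ j * (Q * (L * Δ)))))) * (L ^ n * Δ) +
          Δ * (L * (Q * (M ^ (j+1) * (Q * (L ^ n * Δ))))) := by
        rw [key]
        simp only [mul_add]
        congr 1
        · simp only [mul_assoc]
        · have h2 : M ^ j * (Q * (L * (Q * (L ^ n * Δ)))) =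
              M ^ (j + 1) * (Q * (L ^ n * Δ)) := by
            rw [← ncgd_mM Δ Q L hΔ hsum hM (L ^ n * Δ), pow_succ, mul_assoc]
          rw [h2]
      have hTj : Δ * (L * (Q * (M ^ j * (Q * (L * Δ))))) = 0 := by
        have := ih 1
        rwa [pow_one] at this
      have h3 := expand
      rw [ih (n+1), hTj, zero_mul, zero_add] at h3
      first
      | exact h3.symm
      | exact h3
  intro j
  have := hX j 1
  rwa [pow_one] at this

end
end RingLemmas

open NormedSpace

section Analysis

variable {A : Type*} [NormedRing A] [NormedAlgebra ℝ A] [CompleteSpace A]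

lemma ncgd_tsum_sandwich (b c : A) {f : ℕ → A} (hf : Summable f)
    (h : ∀ n, b * f n * c = 0) : b * (∑' n, f n) * c = 0 := by
  let ψ : A →L[ℝ] A :=
    (((ContinuousLinearMap.mul ℝ A).flip c).comp ((ContinuousLinearMap.mul ℝ A) b))
  have hψ : ∀ x : A, ψ x = b * x * c := fun x => rfl
  calc b * (∑' n, f n) * c = ψ (∑' n, f n) := (hψ _).symm
    _ = ∑' n, ψ (f n) := ψ.map_tsum hf
    _ = 0 := by simp only [hψ, h]; exact tsum_zero

lemma ncgd_exp_of_pow (b c X : A) (h : ∀ n : ℕ, b * X ^ n * c = 0) :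
    b * exp X * c = 0 := by
  rw [exp_eq_tsum ℝ]
  exact ncgd_tsum_sandwich b c (expSeries_summable' (𝕂 := ℝ) X)
    (fun n => by rw [mul_smul_comm, smul_mul_assoc, h n, smul_zero])

lemma ncgd_pow_of_exp (b c X : A) (h : ∀ t : ℝ, 0 ≤ t → b * exp (t • X) * c = 0) :
    ∀ k : ℕ, b * X ^ k * c = 0 := by
  have step1 : ∀ (k : ℕ) (t : ℝ), 0 < t → b * exp (t • X) * X ^ k * c = 0 := by
    intro k
    induction k with
    | zero => intro t ht; simpa using h t ht.le
    | succ k ih =>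
      intro t ht
      have hd : HasDerivAt (fun u : ℝ => b * exp (u • X) * X ^ k * c)
          (b * exp (t • X) * X ^ (k + 1) * c) t := by
        have h1 := hasDerivAt_exp_smul_const (𝕂 := ℝ) X t
        have h2 := (h1.const_mul b).mul_const (X ^ k * c)
        have e1 : (fun u : ℝ => b * exp (u • X) * (X ^ k * c)) =
            (fun u : ℝ => b * exp (u • X) * X ^ k * c) := by
          funext u; simp only [mul_assoc]
        rw [e1] at h2
        have e2 : b * (exp (t • X) * X) * (X ^ k * c) =
            b * exp (t • X) * X ^ (k + 1) * c := by
          rw [pow_succ']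
          simp only [mul_assoc]
        rwa [e2] at h2
      have h0 : (fun u : ℝ => b * exp (u • X) * X ^ k * c) =ᶠ[nhds t] (fun _ => (0 : A)) :=
        Filter.eventuallyEq_of_mem (Ioi_mem_nhds ht) (fun u hu => ih u hu)
      have hd0 : HasDerivAt (fun u : ℝ => b * exp (u • X) * X ^ k * c) (0 : A) t :=
        (hasDerivAt_const t (0 : A)).congr_of_eventuallyEq h0
      exact hd.unique hd0
  have step2 : ∀ k : ℕ, b * exp X * X ^ k * c = 0 := by
    intro k
    have := step1 k 1 one_pos
    rwa [one_smul] at this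
  intro k
  have hinv : exp X * exp (-X) = 1 := by
    letI : NormedAlgebra ℚ A := .restrictScalars ℚ ℝ A
    rw [← exp_add_of_commute ((Commute.refl X).neg_right), add_neg_cancel, exp_zero]
  have hz : (b * exp X) * exp (-X) * (X ^ k * c) = 0 := by
    apply ncgd_exp_of_pow
    intro n
    have := step2 (n + k)
    calc b * exp X * (-X) ^ n * (X ^ k * c)
        = (-1 : ℝ) ^ n • (b * exp X * X ^ (n + k) * c) := by
          rw [show (-X) = (-1 : ℝ) • X by simp, smul_pow, pow_add]
          simp only [mul_smul_comm, smul_mul_assoc, mul_assoc]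
      _ = 0 := by rw [this, smul_zero]
  calc b * X ^ k * c = b * (exp X * exp (-X)) * (X ^ k * c) := by
        rw [hinv, mul_one, mul_assoc]
    _ = (b * exp X) * exp (-X) * (X ^ k * c) := by simp only [mul_assoc]
    _ = 0 := hz

end Analysis

section CH

variable {d : ℕ}
local notation "V" => EuclideanSpace ℂ (Fin d)

lemma ncgd_CH (L Δ : V →L[ℂ] V) (hΔ : Δ * Δ = Δ)
    (hlt : ∀ j < Module.finrank ℂ (LinearMap.range ((1 - Δ : V →L[ℂ] V) : V →ₗ[ℂ] V)),
      (Δ * L * (1 - Δ)) * ((1 - Δ) * L * (1 - Δ)) ^ j * ((1 - Δ) * L * Δ) = 0) :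
    ∀ j : ℕ,
      (Δ * L * (1 - Δ)) * ((1 - Δ) * L * (1 - Δ)) ^ j * ((1 - Δ) * L * Δ) = 0 := by
  set Q : V →L[ℂ] V := 1 - Δ with hQdef
  set M : V →L[ℂ] V := Q * L * Q with hMdef
  set B : V →L[ℂ] V := Δ * L * Q with hBdef
  set C : V →L[ℂ] V := Q * L * Δ with hCdef
  set W : Submodule ℂ V := LinearMap.range (Q : V →ₗ[ℂ] V) with hWdef
  set ℓ : ℕ := Module.finrank ℂ W with hldef
  have hmem : ∀ x ∈ W, (M : V →ₗ[ℂ] V) x ∈ W := by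
    intro x _
    exact ⟨(L * Q) x, by simp [hMdef, ContinuousLinearMap.mul_apply]⟩
  set f : W →ₗ[ℂ] W := LinearMap.restrict (M : V →ₗ[ℂ] V) hmem with hfdef
  have hpow : ∀ (i : ℕ) (w : W), (M ^ i) (w : V) = ((f ^ i) w : V) := by
    intro i
    induction i with
    | zero => intro w; simp
    | succ i ih =>
      intro w
      rw [pow_succ', pow_succ', ContinuousLinearMap.mul_apply, ih w, Module.End.mul_apply]
      exact (LinearMap.restrict_coe_apply _ _ _).symm
  have hp := LinearMap.aeval_self_charpoly f
  have hdeg : (LinearMap.charpoly f).natDegree = ℓ := LinearMap.charpoly_natDegree f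
  have hms : (LinearMap.charpoly f).coeff ℓ = 1 := by
    rw [← hdeg]; exact (LinearMap.charpoly_monic f).coeff_natDegree
  have h := Polynomial.aeval_eq_sum_range (R := ℂ) (p := LinearMap.charpoly f) f
  rw [hdeg, hp] at h
  rw [Finset.sum_range_succ, hms, one_smul] at h
  have hfl : f ^ ℓ = -∑ i ∈ Finset.range ℓ, (LinearMap.charpoly f).coeff i • f ^ i :=
    eq_neg_iff_add_eq_zero.mpr (by rw [add_comm]; exact h.symm)
  intro j
  induction j using Nat.strong_induction_on with
  | _ j ih =>
  rcases lt_or_ge j ℓ with hj | hj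
  · exact hlt j hj
  refine ContinuousLinearMap.ext fun x => ?_
  have hvmem : C x ∈ W := ⟨(L * Δ) x, by simp [hCdef, ContinuousLinearMap.mul_apply]⟩
  have hkey : (M ^ j) (C x) =
      -∑ i ∈ Finset.range ℓ,
        (LinearMap.charpoly f).coeff i • (M ^ (j - ℓ + i)) (C x) := by
    have hsplit : f ^ j = f ^ (j - ℓ) * f ^ ℓ := by
      rw [← pow_add, Nat.sub_add_cancel hj]
    calc (M ^ j) (C x) = ((f ^ j) ⟨C x, hvmem⟩ : V) := hpow j ⟨C x, hvmem⟩
      _ = ((f ^ (j - ℓ)) ((f ^ ℓ) ⟨C x, hvmem⟩) : V) := by rw [hsplit, Module.End.mul_apply]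
      _ = _ := by
        rw [hfl]
        simp only [LinearMap.neg_apply, LinearMap.sum_apply, LinearMap.smul_apply,
          map_neg, map_sum, map_smul]
        have hsummand : ∀ i ∈ Finset.range ℓ,
            (LinearMap.charpoly f).coeff i • ((f ^ (j - ℓ)) ((f ^ i) ⟨C x, hvmem⟩) : V) =
            (LinearMap.charpoly f).coeff i • (M ^ (j - ℓ + i)) (C x) := by
          intro i _
          congr 1
          rw [← Module.End.mul_apply, ← pow_add, ← hpow (j - ℓ + i) ⟨C x, hvmem⟩]
        push_cast
        rw [Finset.sum_congr rfl hsummand]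
        congr 1
        refine Finset.sum_congr rfl fun i _ => ?_
        congr 1
        generalize C x = y
        induction (j - ℓ + i) generalizing y with
        | zero => rfl
        | succ n ih => rw [pow_succ, ContinuousLinearMap.mul_apply, ih, Function.iterate_succ_apply]
  have happ : (B * M ^ j * C) x = B ((M ^ j) (C x)) := by
    rw [ContinuousLinearMap.mul_apply, ContinuousLinearMap.mul_apply]
  rw [happ, hkey]
  have hterm : ∀ i ∈ Finset.range ℓ, B ((M ^ (j - ℓ + i)) (C x)) = 0 := by
    intro i hi
    have hlt' : j - ℓ + i < j := by
      have := Finset.mem_range.mp hi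
      omega
    have := ih (j - ℓ + i) hlt'
    have h2 := congrArg (fun (g : V →L[ℂ] V) => g x) this
    simpa [ContinuousLinearMap.mul_apply] using h2
  simp only [map_neg, map_sum, map_smul]
  rw [Finset.sum_congr rfl fun i hi => by rw [hterm i hi, smul_zero]]
  simp
end CH

/-- Theorem 1: the semigroup `E_t = exp(tL)` satisfies
`Δ E_t Δ E_τ Δ = Δ E_{t+τ} Δ` for all `t, τ ≥ 0` iff `L_pc L_cc^j L_cp = 0`
for all `j < ℓ`, where `ℓ` is the dimension of the coherence subspace (range of `1 - Δ`). -/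
theorem semigroup_ncgd_characterization (d : ℕ)
    (L Δ : EuclideanSpace ℂ (Fin d) →L[ℂ] EuclideanSpace ℂ (Fin d)) (hΔ : Δ * Δ = Δ) :
    (∀ t τ : ℝ, 0 ≤ t → 0 ≤ τ →
      Δ * NormedSpace.exp (t • L) * Δ * NormedSpace.exp (τ • L) * Δ =
      Δ * NormedSpace.exp ((t + τ) • L) * Δ) ↔
    (∀ j < Module.finrank ℂ (LinearMap.range ((1 - Δ : EuclideanSpace ℂ (Fin d) →L[ℂ] EuclideanSpace ℂ (Fin d)) : EuclideanSpace ℂ (Fin d) →ₗ[ℂ] EuclideanSpace ℂ (Fin d))),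
      (Δ * L * (1 - Δ)) * ((1 - Δ) * L * (1 - Δ)) ^ j * ((1 - Δ) * L * Δ) = 0) := by
  classical
  set Q : EuclideanSpace ℂ (Fin d) →L[ℂ] EuclideanSpace ℂ (Fin d) := 1 - Δ with hQdef
  have hsum : Δ + Q = 1 := by rw [hQdef]; abel
  have hsplit : ∀ t τ : ℝ,
      Δ * NormedSpace.exp (t • L) * Q * NormedSpace.exp (τ • L) * Δ =
      Δ * NormedSpace.exp ((t + τ) • L) * Δ -
      Δ * NormedSpace.exp (t • L) * Δ * NormedSpace.exp (τ • L) * Δ := by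
    intro t τ
    have hE : NormedSpace.exp ((t + τ) • L) =
        NormedSpace.exp (t • L) * NormedSpace.exp (τ • L) := by
      have hadd : (t + τ) • L = t • L + τ • L := add_smul t τ L
      rw [hadd]
      have hcomm : (t • L) * (τ • L) = (τ • L) * (t • L) := by
        ext x
        simp only [ContinuousLinearMap.mul_apply, ContinuousLinearMap.smul_apply,
          ContinuousLinearMap.map_smul_of_tower]
        rw [smul_comm]
      letI : NormedAlgebra ℚ (EuclideanSpace ℂ (Fin d) →L[ℂ] EuclideanSpace ℂ (Fin d)) :=
        .restrictScalars ℚ ℝ _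
      exact NormedSpace.exp_add_of_commute hcomm
    rw [hE, hQdef]
    simp only [mul_sub, sub_mul, mul_one, one_mul, mul_assoc]
  constructor
  · -- forward direction
    intro hyp j hj
    have hzero : ∀ t τ : ℝ, 0 ≤ t → 0 ≤ τ →
        Δ * NormedSpace.exp (t • L) * (Q * NormedSpace.exp (τ • L) * Δ) = 0 := by
      intro t τ ht hτ
      have h0 : Δ * NormedSpace.exp (t • L) * Q * NormedSpace.exp (τ • L) * Δ = 0 := by
        rw [hsplit t τ, hyp t τ ht hτ, sub_self]
      calc Δ * NormedSpace.exp (t • L) * (Q * NormedSpace.exp (τ • L) * Δ)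
          = Δ * NormedSpace.exp (t • L) * Q * NormedSpace.exp (τ • L) * Δ := by
            simp only [mul_assoc]
        _ = 0 := h0
    have h1 : ∀ τ : ℝ, 0 ≤ τ → ∀ m : ℕ,
        (Δ * L ^ m * Q) * NormedSpace.exp (τ • L) * Δ = 0 := by
      intro τ hτ m
      have := ncgd_pow_of_exp Δ (Q * NormedSpace.exp (τ • L) * Δ) L
        (fun t ht => hzero t τ ht hτ) m
      calc (Δ * L ^ m * Q) * NormedSpace.exp (τ • L) * Δ
          = Δ * L ^ m * (Q * NormedSpace.exp (τ • L) * Δ) := by simp only [mul_assoc]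
        _ = 0 := this
    have hS : ∀ m n : ℕ, Δ * (L ^ m * (Q * (L ^ n * Δ))) = 0 := by
      intro m n
      have := ncgd_pow_of_exp (Δ * L ^ m * Q) Δ L (fun τ hτ => h1 τ hτ m) n
      calc Δ * (L ^ m * (Q * (L ^ n * Δ)))
          = Δ * L ^ m * Q * L ^ n * Δ := by simp only [mul_assoc]
        _ = 0 := this
    have hT := ncgd_S_to_T Δ Q L hΔ hsum (M := Q * L * Q) rfl hS j
    calc (Δ * L * Q) * (Q * L * Q) ^ j * (Q * L * Δ)
        = Δ * (L * (Q * ((Q * L * Q) ^ j * (Q * (L * Δ))))) := by simp only [mul_assoc]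
      _ = 0 := hT
  · -- backward direction
    intro hTlt t τ ht hτ
    have hTall := ncgd_CH L Δ hΔ hTlt
    have hT' : ∀ j : ℕ, Δ * (L * (Q * ((Q * L * Q) ^ j * (Q * (L * Δ))))) = 0 := by
      intro j
      have := hTall j
      calc Δ * (L * (Q * ((Q * L * Q) ^ j * (Q * (L * Δ)))))
          = (Δ * L * Q) * (Q * L * Q) ^ j * (Q * L * Δ) := by
            rw [hQdef]; simp only [mul_assoc]
        _ = 0 := by rw [hQdef]; exact this
    have hS := ncgd_T_to_S Δ Q L hΔ hsum (M := Q * L * Q) rfl hT'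
    have hinner : ∀ m : ℕ, (Δ * L ^ m * Q) * NormedSpace.exp (τ • L) * Δ = 0 := by
      intro m
      refine ncgd_exp_of_pow (Δ * L ^ m * Q) Δ (τ • L) (fun n => ?_)
      have := hS m n
      calc (Δ * L ^ m * Q) * (τ • L) ^ n * Δ
          = τ ^ n • (Δ * (L ^ m * (Q * (L ^ n * Δ)))) := by
            haveI : IsScalarTower ℝ (EuclideanSpace ℂ (Fin d) →L[ℂ] EuclideanSpace ℂ (Fin d))
                (EuclideanSpace ℂ (Fin d) →L[ℂ] EuclideanSpace ℂ (Fin d)) :=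
              ⟨fun r x y => by ext v; simp⟩
            haveI : SMulCommClass ℝ (EuclideanSpace ℂ (Fin d) →L[ℂ] EuclideanSpace ℂ (Fin d))
                (EuclideanSpace ℂ (Fin d) →L[ℂ] EuclideanSpace ℂ (Fin d)) :=
              ⟨fun r x y => by ext v; simp [ContinuousLinearMap.map_smul_of_tower]⟩
            rw [smul_pow]
            simp only [mul_smul_comm, smul_mul_assoc, mul_assoc]
        _ = 0 := by rw [this]; ext x; simp
    have houter : Δ * NormedSpace.exp (t • L) * (Q * NormedSpace.exp (τ • L) * Δ) = 0 := by
      refine ncgd_exp_of_pow Δ (Q * NormedSpace.exp (τ • L) * Δ) (t • L) (fun m => ?_)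
      have := hinner m
      calc Δ * (t • L) ^ m * (Q * NormedSpace.exp (τ • L) * Δ)
          = t ^ m • ((Δ * L ^ m * Q) * NormedSpace.exp (τ • L) * Δ) := by
            haveI : IsScalarTower ℝ (EuclideanSpace ℂ (Fin d) →L[ℂ] EuclideanSpace ℂ (Fin d))
                (EuclideanSpace ℂ (Fin d) →L[ℂ] EuclideanSpace ℂ (Fin d)) :=
              ⟨fun r x y => by ext v; simp⟩
            haveI : SMulCommClass ℝ (EuclideanSpace ℂ (Fin d) →L[ℂ] EuclideanSpace ℂ (Fin d))
                (EuclideanSpace ℂ (Fin d) →L[ℂ] EuclideanSpace ℂ (Fin d)) :=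
              ⟨fun r x y => by ext v; simp [ContinuousLinearMap.map_smul_of_tower]⟩
            rw [smul_pow]
            simp only [mul_smul_comm, smul_mul_assoc, mul_assoc]
        _ = 0 := by rw [this]; ext x; simp
    have h0 : Δ * NormedSpace.exp (t • L) * Q * NormedSpace.exp (τ • L) * Δ = 0 := by
      calc Δ * NormedSpace.exp (t • L) * Q * NormedSpace.exp (τ • L) * Δ
          = Δ * NormedSpace.exp (t • L) * (Q * NormedSpace.exp (τ • L) * Δ) := by
            simp only [mul_assoc]
        _ = 0 := houter
    have := hsplit t τ
    rw [h0] at this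
    exact (sub_eq_zero.mp this.symm).symm
end

section
/- If L_pc = 0 (equivalently Δ ∘ L ∘ Δ⊥ = 0), then the dynamics generated by L is NCGD: Δ ∘ exp(tL) ∘ Δ⊥ ∘ exp(τL) ∘ Δ = 0 for all t, τ ≥ 0. -/
/-!
The condition `Δ L Δ⊥ = 0` says that `L` leaves `C = ker Δ` invariant. The operators leaving `C`
invariant form a closed subalgebra, so it contains every `exp (t L)`, a limit of polynomials in
`L`; hence already `Δ exp (t L) Δ⊥ = 0`.
-/

open NormedSpace

theorem Subalgebra.exp_mem {𝕂 A : Type*} [Field 𝕂] [CharZero 𝕂] [Ring A] [Algebra 𝕂 A]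
    [TopologicalSpace A] [IsTopologicalRing A] {s : Subalgebra 𝕂 A} (hs : IsClosed (s : Set A))
    {x : A} (hx : x ∈ s) : exp x ∈ s := by
  rw [exp_eq_tsum 𝕂]
  exact tsum_mem hs fun n => s.smul_mem (pow_mem hx n) _

namespace IsIdempotentElem

variable (R : Type*) {A : Type*} [CommSemiring R] [Ring A] [Algebra R A] {e : A}

/-- Writing elements as `2 × 2` block matrices with respect to `1 = e + (1 - e)`, these are the
ones whose upper right block `e * x * (1 - e)` vanishes. -/
def blockLowerTriangular (he : IsIdempotentElem e) : Subalgebra R A where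
  carrier := {x | e * x * (1 - e) = 0}
  mul_mem' {x y} (hx : e * x * (1 - e) = 0) (hy : e * y * (1 - e) = 0) :=
    calc e * (x * y) * (1 - e) = e * x * (e * y * (1 - e)) + e * x * (1 - e) * y * (1 - e) := by
          noncomm_ring
      _ = 0 := by rw [hx, hy, mul_zero, zero_mul, zero_mul, add_zero]
  add_mem' {x y} (hx : e * x * (1 - e) = 0) (hy : e * y * (1 - e) = 0) := by
    show e * (x + y) * (1 - e) = 0
    rw [mul_add, add_mul, hx, hy, add_zero]
  algebraMap_mem' r := by
    simp only [Set.mem_ofPred_eq, Algebra.algebraMap_eq_smul_one, mul_smul_comm, smul_mul_assoc,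
      mul_one, mul_sub, he.eq, sub_self]

variable {R}

theorem mem_blockLowerTriangular (he : IsIdempotentElem e) {x : A} :
    x ∈ he.blockLowerTriangular R ↔ e * x * (1 - e) = 0 :=
  Iff.rfl

theorem isClosed_blockLowerTriangular [TopologicalSpace A] [IsTopologicalRing A] [T1Space A]
    (he : IsIdempotentElem e) : IsClosed (he.blockLowerTriangular R : Set A) :=
  isClosed_singleton.preimage (by fun_prop : Continuous fun x : A => e * x * (1 - e))

end IsIdempotentElem

/-- if `L_pc = 0` then the dynamics generated by `L` is NCGD. -/
theorem pc_zero_implies_ncgd (d : ℕ)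
    (L Δ : EuclideanSpace ℂ (Fin d) →L[ℂ] EuclideanSpace ℂ (Fin d)) (hΔ : Δ * Δ = Δ)
    (h : Δ * L * (1 - Δ) = 0) :
    ∀ t τ : ℝ, 0 ≤ t → 0 ≤ τ →
      Δ * NormedSpace.exp (t • L) * (1 - Δ) * NormedSpace.exp (τ • L) * Δ = 0 := by
  intro t τ _ _
  have hΔ' : IsIdempotentElem Δ := hΔ
  have hL : L ∈ hΔ'.blockLowerTriangular ℝ := h
  have hexp : exp (t • L) ∈ hΔ'.blockLowerTriangular ℝ :=
    Subalgebra.exp_mem hΔ'.isClosed_blockLowerTriangular (Subalgebra.smul_mem _ hL t)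
  rw [hΔ'.mem_blockLowerTriangular.mp hexp, zero_mul, zero_mul]
end

section
/- If L ∘ Δ ∘ L = L ∘ L (equivalently L ∘ Δ⊥ ∘ L = 0), then Δ ∘ L^n ∘ Δ⊥ ∘ L^{n'} ∘ Δ = 0 for all n, n' ≥ 1, and hence the dynamics exp(tL) is NCGD. -/
/-!
Since `Δ` is idempotent, `L Δ L = L L` says `L Δ⊥ L = 0`, so every word `L^n Δ⊥ L^{n'}` with
`n, n' ≥ 1` contains the factor `L Δ⊥ L` and vanishes, while the words with `n = 0` or `n' = 0`
are killed by `Δ Δ⊥ = Δ⊥ Δ = 0` after sandwiching between two copies of `Δ`. The exponentials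
are norm-convergent power series, and the sandwich `X ↦ A X B` is continuous and additive, so it
passes through both series termwise.
-/

open NormedSpace

theorem pow_mul_mul_pow_eq_zero {M : Type*} [MonoidWithZero M] {x p y : M}
    (h : x * p * y = 0) {n k : ℕ} (hn : n ≠ 0) (hk : k ≠ 0) : x ^ n * p * y ^ k = 0 := by
  obtain ⟨m, rfl⟩ := Nat.exists_eq_succ_of_ne_zero hn
  obtain ⟨j, rfl⟩ := Nat.exists_eq_succ_of_ne_zero hk
  calc x ^ (m + 1) * p * y ^ (j + 1) = x ^ m * (x * p * y) * y ^ j := by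
        rw [pow_succ x, pow_succ' y]; simp only [mul_assoc]
    _ = 0 := by rw [h, mul_zero, zero_mul]

theorem IsIdempotentElem.mul_pow_mul_one_sub_mul_pow_mul_eq_zero_s12 {R : Type*} [Ring R] {e x y : R}
    (he : IsIdempotentElem e) (h : x * (1 - e) * y = 0) (n k : ℕ) :
    e * x ^ n * (1 - e) * y ^ k * e = 0 := by
  rcases eq_or_ne n 0 with rfl | hn
  · simp [he.mul_one_sub_self]
  rcases eq_or_ne k 0 with rfl | hk
  · simp [mul_assoc, he.one_sub_mul_self]
  calc e * x ^ n * (1 - e) * y ^ k * e = e * (x ^ n * (1 - e) * y ^ k) * e := by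
        simp only [mul_assoc]
    _ = 0 := by rw [pow_mul_mul_pow_eq_zero h hn hk, mul_zero, zero_mul]

section Exp

variable (𝕂 : Type*) {𝔸 : Type*} [RCLike 𝕂] [NormedRing 𝔸] [NormedAlgebra 𝕂 𝔸] [CompleteSpace 𝔸]

include 𝕂 in
theorem mul_exp_mul_eq_zero {a b x : 𝔸} (h : ∀ n : ℕ, a * x ^ n * b = 0) :
    a * exp x * b = 0 := by
  have hs := expSeries_summable' (𝕂 := 𝕂) x
  rw [exp_eq_tsum 𝕂, ← hs.tsum_mul_left, ← (hs.mul_left a).tsum_mul_right]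
  simp [h]

include 𝕂 in
theorem mul_exp_mul_exp_mul_eq_zero {a b c x y : 𝔸}
    (h : ∀ n k : ℕ, a * x ^ n * b * y ^ k * c = 0) : a * exp x * b * exp y * c = 0 := by
  refine mul_exp_mul_eq_zero 𝕂 fun k => ?_
  have hk : a * exp x * (b * y ^ k * c) = 0 :=
    mul_exp_mul_eq_zero 𝕂 fun n => by simpa only [mul_assoc] using h n k
  simpa only [mul_assoc] using hk

end Exp

/-- if `L ∘ Δ ∘ L = L ∘ L` then `Δ L^n Δ⊥ L^{n'} Δ = 0` for all `n, n' ≥ 1`,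
and the dynamics `exp(tL)` is NCGD. -/
theorem dephasing_insensitive_implies_ncgd (d : ℕ)
    (L Δ : EuclideanSpace ℂ (Fin d) →L[ℂ] EuclideanSpace ℂ (Fin d)) (hΔ : Δ * Δ = Δ)
    (h : L * Δ * L = L * L) :
    (∀ n n' : ℕ, 1 ≤ n → 1 ≤ n' → Δ * L ^ n * (1 - Δ) * L ^ n' * Δ = 0) ∧
    (∀ t τ : ℝ, 0 ≤ t → 0 ≤ τ →
      Δ * NormedSpace.exp (t • L) * (1 - Δ) * NormedSpace.exp (τ • L) * Δ = 0) := by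
  have hL : L * (1 - Δ) * L = 0 := by rw [mul_sub, mul_one, sub_mul, h, sub_self]
  refine ⟨fun n n' _ _ => IsIdempotentElem.mul_pow_mul_one_sub_mul_pow_mul_eq_zero_s12 hΔ hL n n',
    fun t τ _ _ => mul_exp_mul_exp_mul_eq_zero ℂ
      (IsIdempotentElem.mul_pow_mul_one_sub_mul_pow_mul_eq_zero_s12 hΔ ?_)⟩
  -- The real scalars are moved to `ℂ`, where `smul_mul_assoc` and `mul_smul_comm` have instances.
  rw [← Complex.coe_smul t L, ← Complex.coe_smul τ L, smul_mul_assoc, smul_mul_assoc,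
    mul_smul_comm, hL, smul_zero, smul_zero]
end

section
/- For a 2-dimensional coherence subspace (ℓ = 2, e.g. a qubit), exp(tL) is NCGD if and only if L_pc ∘ L_cp = 0 and L_pc ∘ L_cc ∘ L_cp = 0. -/
open NormedSpace Filter
set_option synthInstance.maxHeartbeats 1000000
set_option maxHeartbeats 1000000


section core

variable {R : Type*} [Ring R] [Algebra ℂ R]

/-- Core algebraic lemma. -/
lemma core_key (Δ L : R) (hΔ : Δ * Δ = Δ) (a b : ℂ)
    (hCH : ((1-Δ)*L*(1-Δ)) * ((1-Δ)*L*(1-Δ)) = a • ((1-Δ)*L*(1-Δ)) + b • (1-Δ))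
    (h1 : (Δ*L*(1-Δ)) * ((1-Δ)*L*Δ) = 0)
    (h2 : (Δ*L*(1-Δ)) * ((1-Δ)*L*(1-Δ)) * ((1-Δ)*L*Δ) = 0) :
    ∀ m n : ℕ, Δ * (L^m * ((1-Δ) * (L^n * Δ))) = 0 := by
  set Q : R := 1 - Δ with hQdef
  have hQ : Q * Q = Q := by
    rw [hQdef, sub_mul, one_mul, mul_sub, mul_one, hΔ, sub_self, sub_zero]
  have hΔQ : Δ * Q = 0 := by rw [hQdef, mul_sub, mul_one, hΔ, sub_self]
  have hQΔ : Q * Δ = 0 := by rw [hQdef, sub_mul, one_mul, hΔ, sub_self]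
  have hsum : Δ + Q = 1 := by
    rw [hQdef]; abel
  have eΔΔ : ∀ x : R, Δ * (Δ * x) = Δ * x := fun x => by rw [← mul_assoc, hΔ]
  have eQQ : ∀ x : R, Q * (Q * x) = Q * x := fun x => by rw [← mul_assoc, hQ]
  have eΔQ : ∀ x : R, Δ * (Q * x) = 0 := fun x => by rw [← mul_assoc, hΔQ, zero_mul]
  have eQΔ : ∀ x : R, Q * (Δ * x) = 0 := fun x => by rw [← mul_assoc, hQΔ, zero_mul]
  have esplit : ∀ x : R, x = Δ * x + Q * x := fun x => by rw [← add_mul, hsum, one_mul]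
  set g : ℕ → R := fun k => Q * (L*Q)^k with hgdef
  have g0 : ∀ x : R, g 0 * x = Q * x := fun x => by simp [hgdef]
  have gsucc_r : ∀ (k : ℕ) (x : R), g (k+1) * x = g k * (L * (Q * x)) := fun k x => by
    simp only [hgdef, pow_succ, mul_assoc]
  have gsucc_l : ∀ (k : ℕ) (x : R), g (k+1) * x = Q * (L * (g k * x)) := fun k x => by
    simp only [hgdef, pow_succ', mul_assoc]
  have gQ : ∀ (k : ℕ) (x : R), g k * (Q * x) = g k * x := by
    intro k
    induction k with
    | zero => intro x; rw [g0, g0, eQQ]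
    | succ k ih => intro x; rw [gsucc_r, eQQ, ← gsucc_r]
  have gΔ : ∀ (k : ℕ) (x : R), g k * (Δ * x) = 0 := by
    intro k
    induction k with
    | zero => intro x; rw [g0, eQΔ]
    | succ k ih => intro x; rw [gsucc_r, eQΔ, mul_zero, mul_zero]
  have eQg : ∀ (k : ℕ) (x : R), Q * (g k * x) = g k * x := fun k x => by
    simp only [hgdef, mul_assoc, eQQ]
  -- Cayley–Hamilton recurrence
  have ghCH : ∀ (k : ℕ) (x : R), g (k+2) * x = a • (g (k+1) * x) + b • (g k * x) := by
    intro k x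
    have e1 : g (k+2) * x = g k * (((Q*L*Q) * (Q*L*Q)) * x) := by
      rw [gsucc_r, gsucc_r, ← gQ]
      simp only [mul_assoc, eQQ]
    rw [e1, hCH, add_mul, smul_mul_assoc, smul_mul_assoc, mul_add, mul_smul_comm,
      mul_smul_comm, gQ,
      show (Q*L*Q * x : R) = Q*(L*(Q*x)) from by simp only [mul_assoc], gQ, ← gsucc_r]
  -- S1
  have S1 : ∀ k : ℕ, Δ * (L * (g k * (L * Δ))) = 0 := by
    intro k
    induction k using Nat.twoStepInduction with
    | zero =>
      rw [g0]
      calc Δ * (L * (Q * (L * Δ))) = (Δ*L*Q) * ((Q*L*Δ)) := by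
            simp only [mul_assoc, eQQ]
        _ = 0 := h1
    | one =>
      have : g 1 * (L * Δ) = Q * (L * (Q * (L * Δ))) := by rw [gsucc_l, g0]
      rw [this]
      calc Δ * (L * (Q * (L * (Q * (L * Δ))))) = (Δ*L*Q) * ((Q*L*Q)) * ((Q*L*Δ)) := by
            simp only [mul_assoc, eQQ]
        _ = 0 := h2
    | more k ih ih1 =>
      rw [ghCH, mul_add, mul_add, mul_smul_comm, mul_smul_comm, mul_smul_comm,
        mul_smul_comm, ih, ih1, smul_zero, smul_zero, add_zero]
  -- S2
  have S2 : ∀ (n : ℕ) (k : ℕ), Δ * (L * (g k * (L^(n+1) * Δ))) = 0 := by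
    intro n
    induction n with
    | zero => intro k; simpa using S1 k
    | succ n ih =>
      intro k
      have hsplitg : g k * (L^(n+2) * Δ)
          = g k * (L * (Δ * (L^(n+1) * Δ))) + g k * (L * (Q * (L^(n+1) * Δ))) := by
        rw [show (L^(n+2) : R) * Δ = L * (L^(n+1) * Δ) from by rw [pow_succ', mul_assoc],
          ← mul_add, ← mul_add, ← esplit]
      rw [hsplitg, mul_add, mul_add]
      have t1 : Δ * (L * (g k * (L * (Δ * (L^(n+1) * Δ))))) =
          (Δ * (L * (g k * (L * Δ)))) * (L^(n+1) * Δ) := by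
        simp only [mul_assoc]
      have t2 : g k * (L * (Q * (L^(n+1) * Δ))) = g (k+1) * (L^(n+1) * Δ) := by
        rw [gsucc_r]
      rw [t1, S1 k, zero_mul, t2, ih (k+1)]
      exact add_zero 0
  -- S3
  have S3 : ∀ (m : ℕ) (k n : ℕ), Δ * (L^(m+1) * (g k * (L^(n+1) * Δ))) = 0 := by
    intro m
    induction m with
    | zero => intro k n; simpa using S2 n k
    | succ m ih =>
      intro k n
      have e : Δ * (L^(m+2) * (g k * (L^(n+1) * Δ)))
          = Δ * (L^(m+1) * (Δ * (L * (g k * (L^(n+1) * Δ)))))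
            + Δ * (L^(m+1) * (Q * (L * (g k * (L^(n+1) * Δ))))) := by
        rw [show (L^(m+2) : R) * (g k * (L^(n+1) * Δ)) = L^(m+1) * (L * (g k * (L^(n+1) * Δ)))
            from by rw [pow_succ, mul_assoc],
          ← mul_add, ← mul_add, ← esplit]
      rw [e]
      have t1 : Δ * (L^(m+1) * (Δ * (L * (g k * (L^(n+1) * Δ)))))
          = (Δ * (L^(m+1) * Δ)) * (Δ * (L * (g k * (L^(n+1) * Δ)))) := by
        simp only [mul_assoc, eΔΔ]
      have t2 : Q * (L * (g k * (L^(n+1) * Δ))) = g (k+1) * (L^(n+1) * Δ) := by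
        rw [gsucc_l]
      rw [t1, S2 n k, mul_zero, t2, ih (k+1) n, add_zero]
  -- conclude
  intro m n
  match m, n with
  | 0, n => simpa using eΔQ (L^n * Δ)
  | m+1, 0 =>
    simp only [pow_zero, one_mul]
    rw [hQΔ, mul_zero, mul_zero]
  | m+1, n+1 =>
    have := S3 m 0 n
    rw [g0] at this
    exact this

end core
set_option synthInstance.maxHeartbeats 1000000
set_option maxHeartbeats 1000000

open NormedSpace

lemma ch_exists (d : ℕ) (L Δ : EuclideanSpace ℂ (Fin d) →L[ℂ] EuclideanSpace ℂ (Fin d))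
    (hΔ : Δ * Δ = Δ)
    (hdim : Module.finrank ℂ (LinearMap.range (((1 - Δ : EuclideanSpace ℂ (Fin d) →L[ℂ] EuclideanSpace ℂ (Fin d)) : EuclideanSpace ℂ (Fin d) →ₗ[ℂ] EuclideanSpace ℂ (Fin d)))) = 2) :
    ∃ a b : ℂ, ((1-Δ)*L*(1-Δ)) * ((1-Δ)*L*(1-Δ)) = a • ((1-Δ)*L*(1-Δ)) + b • (1-Δ) := by
  set E := EuclideanSpace ℂ (Fin d)
  set Q : E →L[ℂ] E := 1 - Δ with hQdef
  have hQ : Q * Q = Q := by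
    rw [hQdef, sub_mul, one_mul, mul_sub, mul_one, hΔ, sub_self, sub_zero]
  set M : E →L[ℂ] E := Q * L * Q with hMdef
  have hMQ : M * Q = M := by rw [hMdef, mul_assoc, hQ]
  set W : Submodule ℂ E := LinearMap.range (Q : E →ₗ[ℂ] E) with hWdef
  have hmem : ∀ x ∈ W, (M : E →ₗ[ℂ] E) x ∈ W := by
    intro x _
    exact ⟨L (Q x), rfl⟩
  set f : W →ₗ[ℂ] W := (M : E →ₗ[ℂ] E).restrict hmem with hfdef
  have hfval : ∀ w : W, (f w : E) = M (w : E) := fun w => rfl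
  have hdeg : (LinearMap.charpoly f).natDegree = 2 := by
    rw [LinearMap.charpoly_natDegree]; exact hdim
  have hlead : (LinearMap.charpoly f).coeff 2 = 1 := by
    have := (LinearMap.charpoly_monic f).coeff_natDegree
    rwa [hdeg] at this
  have h0 := LinearMap.aeval_self_charpoly f
  rw [Polynomial.aeval_eq_sum_range, hdeg] at h0
  rw [Finset.sum_range_succ, Finset.sum_range_succ, Finset.sum_range_one, hlead,
    pow_zero, pow_one, one_smul] at h0
  set c0 := (LinearMap.charpoly f).coeff 0
  set c1 := (LinearMap.charpoly f).coeff 1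
  refine ⟨-c1, -c0, ?_⟩
  have hf2 : (f : Module.End ℂ W) ^ 2 = (-c1) • f + (-c0) • (1 : Module.End ℂ W) := by
    rw [eq_neg_of_add_eq_zero_right h0, neg_add]
    simp only [← neg_smul]
    exact add_comm _ _
  have hpt : ∀ x : E, M (M x) = (-c1) • M x + (-c0) • Q x := by
    intro x
    have hw : Q x ∈ W := ⟨x, rfl⟩
    have h2 := DFunLike.congr_fun hf2 (⟨Q x, hw⟩ : W)
    rw [show ((f : Module.End ℂ W) ^ 2) (⟨Q x, hw⟩ : W) = f (f (⟨Q x, hw⟩ : W)) from by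
      rw [pow_two]; rfl] at h2
    rw [LinearMap.add_apply, LinearMap.smul_apply, LinearMap.smul_apply,
      Module.End.one_apply] at h2
    have h3 := congrArg Subtype.val h2
    rw [Submodule.coe_add, SetLike.val_smul, SetLike.val_smul] at h3
    have h4 : M (M (Q x)) = -c1 • M (Q x) + -c0 • Q x := h3
    have hMQx : M (Q x) = M x := by
      conv_rhs => rw [← hMQ]
      rfl
    rw [hMQx] at h4
    exact h4
  apply ContinuousLinearMap.ext
  intro x
  rw [ContinuousLinearMap.mul_apply, ContinuousLinearMap.add_apply,
    ContinuousLinearMap.smul_apply, ContinuousLinearMap.smul_apply]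
  exact hpt x


open NormedSpace Filter

section analytic

variable {A : Type*} [NormedRing A] [NormedAlgebra ℝ A] [CompleteSpace A]

lemma deriv_vanish (L C D : A)
    (h : ∀ t : ℝ, 0 ≤ t → C * exp (t • L) * D = 0) :
    ∀ t : ℝ, 0 ≤ t → (C * L) * exp (t • L) * D = 0 := by
  have hexpc : Continuous fun t : ℝ => exp (t • L) :=
    (continuous_iff_continuousAt.2 fun x => (exp_analytic (𝕂 := ℝ) x).continuousAt).comp (continuous_id.smul continuous_const)
  have hc : Continuous fun t : ℝ => (C * L) * exp (t • L) * D :=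
    (continuous_const.mul hexpc).mul continuous_const
  have hpos : ∀ t : ℝ, 0 < t → (C * L) * exp (t • L) * D = 0 := by
    intro t ht
    have h1 : HasDerivAt (fun u : ℝ => exp (u • L)) (L * exp (t • L)) t :=
      hasDerivAt_exp_smul_const' L t
    have h2 := (h1.const_mul C).mul_const D
    have h3 : HasDerivAt (fun u : ℝ => C * exp (u • L) * D) 0 t := by
      have heq : (fun u : ℝ => C * exp (u • L) * D) =ᶠ[nhds t] fun _ => (0 : A) := by
        filter_upwards [Ioi_mem_nhds ht] with u hu
        exact h u hu.le
      exact (hasDerivAt_const t (0 : A)).congr_of_eventuallyEq heq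
    have h4 := h2.unique h3
    calc (C * L) * exp (t • L) * D = C * (L * exp (t • L)) * D := by
          rw [mul_assoc C L]
      _ = 0 := h4
  intro t ht
  rcases eq_or_lt_of_le ht with heq | hlt
  · subst heq
    have h5 : Tendsto (fun u : ℝ => (C * L) * exp (u • L) * D) (nhdsWithin 0 (Set.Ioi 0))
        (nhds ((C * L) * exp ((0 : ℝ) • L) * D)) :=
      (hc.tendsto 0).mono_left nhdsWithin_le_nhds
    have h6 : Tendsto (fun u : ℝ => (C * L) * exp (u • L) * D) (nhdsWithin 0 (Set.Ioi 0))
        (nhds 0) := by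
      apply Tendsto.congr' _ tendsto_const_nhds
      filter_upwards [self_mem_nhdsWithin] with u hu
      exact (hpos u hu).symm
    exact tendsto_nhds_unique h5 h6
  · exact hpos t hlt

end analytic

section tsum

variable {A : Type*} [NormedRing A] [NormedAlgebra ℂ A] [CompleteSpace A]

lemma sandwich_exp_eq_zero (L C D : A) (h : ∀ n : ℕ, C * L ^ n * D = 0) (t : ℝ) :
    C * exp (t • L) * D = 0 := by
  have hs : Summable fun n : ℕ => ((n.factorial : ℂ))⁻¹ • (t • L) ^ n :=
    expSeries_summable' (𝕂 := ℂ) (t • L)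
  let Φ : A →L[ℂ] A := ContinuousLinearMap.mulLeftRight ℂ A C D
  have hΦ : ∀ x : A, Φ x = C * x * D := fun x =>
    ContinuousLinearMap.mulLeftRight_apply ℂ A C D x
  have hzero : ∀ n : ℕ, Φ (((n.factorial : ℂ))⁻¹ • (t • L) ^ n) = 0 := by
    intro n
    rw [map_smul, hΦ, smul_pow, mul_smul_comm, smul_mul_assoc, h n, smul_zero, smul_zero]
  calc C * exp (t • L) * D = Φ (∑' n : ℕ, ((n.factorial : ℂ))⁻¹ • (t • L) ^ n) := by
        rw [hΦ]; simp only [exp_eq_tsum ℂ]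
    _ = ∑' n : ℕ, Φ (((n.factorial : ℂ))⁻¹ • (t • L) ^ n) := Φ.map_tsum hs
    _ = 0 := by simp only [hzero, tsum_zero]

end tsum

/-- for a 2-dimensional coherence subspace, `exp(tL)` is NCGD iff
`L_pc L_cp = 0` and `L_pc L_cc L_cp = 0`. -/
theorem qubit_ncgd_characterization (d : ℕ)
    (L Δ : EuclideanSpace ℂ (Fin d) →L[ℂ] EuclideanSpace ℂ (Fin d)) (hΔ : Δ * Δ = Δ)
    (hdim : Module.finrank ℂ (LinearMap.range (((1 - Δ : EuclideanSpace ℂ (Fin d) →L[ℂ] EuclideanSpace ℂ (Fin d)) : EuclideanSpace ℂ (Fin d) →ₗ[ℂ] EuclideanSpace ℂ (Fin d)))) = 2) :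
    (∀ t τ : ℝ, 0 ≤ t → 0 ≤ τ →
      Δ * NormedSpace.exp (t • L) * (1 - Δ) * NormedSpace.exp (τ • L) * Δ = 0) ↔
    ((Δ * L * (1 - Δ)) * ((1 - Δ) * L * Δ) = 0 ∧
     (Δ * L * (1 - Δ)) * ((1 - Δ) * L * (1 - Δ)) * ((1 - Δ) * L * Δ) = 0) := by
  set E := EuclideanSpace ℂ (Fin d)
  set Q : E →L[ℂ] E := 1 - Δ with hQdef
  have hQ : Q * Q = Q := by
    rw [hQdef, sub_mul, one_mul, mul_sub, mul_one, hΔ, sub_self, sub_zero]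
  have eQQ : ∀ x : E →L[ℂ] E, Q * (Q * x) = Q * x := fun x => by rw [← mul_assoc, hQ]
  constructor
  · intro hN
    have hE : (exp : (E →L[ℂ] E) → (E →L[ℂ] E)) = exp := rfl
    have hN' : ∀ τ : ℝ, 0 ≤ τ → ∀ t : ℝ, 0 ≤ t →
        Δ * exp (t • L) * (Q * exp (τ • L) * Δ) = 0 := by
      intro τ hτ t ht
      have h := hN t τ ht hτ
      rw [hE] at h
      simp only [mul_assoc] at h ⊢
      exact h
    have st1 : ∀ τ : ℝ, 0 ≤ τ → (Δ * L * Q) * exp (τ • L) * Δ = 0 := by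
      intro τ hτ
      have h := deriv_vanish L Δ (Q * exp (τ • L) * Δ) (hN' τ hτ) 0 le_rfl
      rw [zero_smul, exp_zero, mul_one] at h
      simp only [mul_assoc] at h ⊢
      exact h
    have st2 := deriv_vanish L (Δ * L * Q) Δ st1
    have k11 : Δ * (L * (Q * (L * Δ))) = 0 := by
      have h := st2 0 le_rfl
      rw [zero_smul, exp_zero, mul_one] at h
      simp only [mul_assoc] at h
      exact h
    have k12 : Δ * (L * (Q * (L * (L * Δ)))) = 0 := by
      have st2' : ∀ τ : ℝ, 0 ≤ τ → (Δ * L * Q * L) * exp (τ • L) * Δ = 0 := st2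
      have h := deriv_vanish L (Δ * L * Q * L) Δ st2' 0 le_rfl
      rw [zero_smul, exp_zero, mul_one] at h
      simp only [mul_assoc] at h
      exact h
    constructor
    · have e : (Δ * L * Q) * (Q * L * Δ) = Δ * (L * (Q * (Q * (L * Δ)))) := by
        simp only [mul_assoc]
      rw [e, eQQ]
      exact k11
    · have e : (Δ * L * Q) * (Q * L * Q) * (Q * L * Δ)
          = Δ * (L * (Q * (Q * (L * (Q * (Q * (L * Δ))))))) := by
        simp only [mul_assoc]
      rw [e, eQQ, eQQ]
      have hsub : Q * (L * Δ) = L * Δ - Δ * (L * Δ) := by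
        rw [hQdef, sub_mul, one_mul]
      rw [hsub]
      simp only [mul_sub]
      rw [k12]
      rw [show Δ * (L * (Q * (L * (Δ * (L * Δ))))) = (Δ * (L * (Q * (L * Δ)))) * (L * Δ) from by
        simp only [mul_assoc], k11, zero_mul, sub_zero]
  · rintro ⟨h1, h2⟩
    obtain ⟨a, b, hCH⟩ := ch_exists d L Δ hΔ hdim
    have key := core_key Δ L hΔ a b hCH h1 h2
    intro t τ ht hτ
    have inner : ∀ m n : ℕ, (Δ * L ^ m * Q) * L ^ n * Δ = 0 := by
      intro m n
      have h := key m n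
      simp only [mul_assoc] at h ⊢
      exact h
    have innerExp : ∀ m : ℕ, Δ * L ^ m * (Q * exp (τ • L) * Δ) = 0 := by
      intro m
      have h := sandwich_exp_eq_zero L (Δ * L ^ m * Q) Δ (inner m) τ
      simp only [mul_assoc] at h ⊢
      exact h
    have final := sandwich_exp_eq_zero L Δ (Q * exp (τ • L) * Δ) innerExp t
    simp only [mul_assoc] at final ⊢
    exact final
end

section
/- Explicit product formula: if L_pc ∘ L_cc^j ∘ L_cp = 0 for all j ∈ ℕ, then for all n, n' ≥ 1, Δ ∘ L^n ∘ Δ⊥ ∘ L^{n'} ∘ Δ = ∑_{j=1}^{n} ∑_{j'=1}^{n'} L_pp^{j−1} ∘ L_pc ∘ L_cc^{n−j+j'−1} ∘ L_cp ∘ L_pp^{n'−j'}, which equals 0. -/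
/-!
Write `q = 1 - p`. Inserting `1 = p + q` before the last (resp. after the first) factor `L` gives
`p L^(n+1) q = (p L^n p)(p L q) + (p L^n q)(q L q)` and
`q L^(n'+1) p = (q L p)(p L^n' p) + (q L q)(q L^n' p)`.
Inducting along the first recursion and then the second shows that `p L^n q (q L q)^m (q L p)`
and then `p L^n q (q L q)^m (q L^n' p)` vanish, since every term produced contains a factor
`(p L q)(q L q)^j (q L p)`. The same factor kills every summand of the explicit formula, so both
sides are `0`.
-/

namespace IsIdempotentElem

variable {R : Type*} [Ring R] {p : R} (hp : IsIdempotentElem p) (L : R)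
include hp

theorem mul_pow_succ_mul_one_sub_s18 (n : ℕ) :
    p * L ^ (n + 1) * (1 - p) =
      p * L ^ n * p * (p * L * (1 - p)) + p * L ^ n * (1 - p) * ((1 - p) * L * (1 - p)) := by
  calc p * L ^ (n + 1) * (1 - p) = p * L ^ n * (p + (1 - p)) * L * (1 - p) := by
        rw [add_sub_cancel, mul_one, pow_succ, ← mul_assoc]
    _ = _ := by
        conv_rhs =>
          simp only [← mul_assoc]
          rw [mul_assoc _ p p, hp.eq, mul_assoc _ (1 - p) (1 - p), hp.one_sub.eq]
        noncomm_ring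

theorem one_sub_mul_pow_succ_mul (n : ℕ) :
    (1 - p) * L ^ (n + 1) * p =
      ((1 - p) * L * p) * (p * L ^ n * p) + ((1 - p) * L * (1 - p)) * ((1 - p) * L ^ n * p) := by
  calc (1 - p) * L ^ (n + 1) * p = (1 - p) * L * (p + (1 - p)) * L ^ n * p := by
        rw [add_sub_cancel, mul_one, pow_succ', ← mul_assoc]
    _ = _ := by
        conv_rhs =>
          simp only [← mul_assoc]
          rw [mul_assoc _ p p, hp.eq, mul_assoc _ (1 - p) (1 - p), hp.one_sub.eq]
        noncomm_ring

variable (h : ∀ j : ℕ, p * L * (1 - p) * ((1 - p) * L * (1 - p)) ^ j * ((1 - p) * L * p) = 0)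
include h

theorem mul_pow_mul_one_sub_mul_pow_mul_one_sub_mul_mul_eq_zero (n m : ℕ) :
    p * L ^ n * (1 - p) * ((1 - p) * L * (1 - p)) ^ m * ((1 - p) * L * p) = 0 := by
  induction n generalizing m with
  | zero => rw [pow_zero, mul_one, hp.mul_one_sub_self, zero_mul, zero_mul]
  | succ n ih =>
    calc _ = p * L ^ n * p * (p * L * (1 - p) * ((1 - p) * L * (1 - p)) ^ m * ((1 - p) * L * p))
          + p * L ^ n * (1 - p) * ((1 - p) * L * (1 - p)) ^ (m + 1) * ((1 - p) * L * p) := by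
          rw [hp.mul_pow_succ_mul_one_sub_s18, pow_succ']; simp only [add_mul, mul_assoc]
      _ = 0 := by rw [h, ih, mul_zero, zero_add]

theorem mul_pow_mul_one_sub_mul_pow_mul_one_sub_mul_pow_mul_eq_zero (n m n' : ℕ) :
    p * L ^ n * (1 - p) * ((1 - p) * L * (1 - p)) ^ m * ((1 - p) * L ^ n' * p) = 0 := by
  induction n' generalizing m with
  | zero => rw [pow_zero, mul_one, hp.one_sub_mul_self, mul_zero]
  | succ n' ih =>
    calc _ = p * L ^ n * (1 - p) * ((1 - p) * L * (1 - p)) ^ m * ((1 - p) * L * p) *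
            (p * L ^ n' * p)
          + p * L ^ n * (1 - p) * ((1 - p) * L * (1 - p)) ^ (m + 1) * ((1 - p) * L ^ n' * p) := by
          rw [hp.one_sub_mul_pow_succ_mul, pow_succ]; simp only [mul_add, mul_assoc]
      _ = 0 := by
          rw [hp.mul_pow_mul_one_sub_mul_pow_mul_one_sub_mul_mul_eq_zero L h, ih, zero_mul,
            zero_add]

theorem mul_pow_mul_one_sub_mul_pow_mul_eq_zero_s18 (n n' : ℕ) :
    p * L ^ n * (1 - p) * L ^ n' * p = 0 := by
  calc _ = p * L ^ n * (1 - p) * ((1 - p) * L * (1 - p)) ^ 0 * ((1 - p) * L ^ n' * p) := by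
        rw [pow_zero, mul_one]
        simp only [← mul_assoc]
        rw [mul_assoc _ (1 - p) (1 - p), hp.one_sub.eq]
    _ = 0 := hp.mul_pow_mul_one_sub_mul_pow_mul_one_sub_mul_pow_mul_eq_zero L h n 0 n'

end IsIdempotentElem

theorem explicit_product_formula_general (V : Type*) [AddCommGroup V] [Module ℂ V]
    (L Δ : Module.End ℂ V) (hΔ : Δ * Δ = Δ)
    (h : ∀ j : ℕ, (Δ * L * (1 - Δ)) * ((1 - Δ) * L * (1 - Δ)) ^ j * ((1 - Δ) * L * Δ) = 0) :
    ∀ n n' : ℕ, 1 ≤ n → 1 ≤ n' →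
      Δ * L ^ n * (1 - Δ) * L ^ n' * Δ =
        (∑ j ∈ Finset.Icc 1 n, ∑ j' ∈ Finset.Icc 1 n',
          (Δ * L * Δ) ^ (j - 1) * (Δ * L * (1 - Δ)) *
            ((1 - Δ) * L * (1 - Δ)) ^ (n - j + j' - 1) *
            ((1 - Δ) * L * Δ) * (Δ * L * Δ) ^ (n' - j')) ∧
      (∑ j ∈ Finset.Icc 1 n, ∑ j' ∈ Finset.Icc 1 n',
          (Δ * L * Δ) ^ (j - 1) * (Δ * L * (1 - Δ)) *
            ((1 - Δ) * L * (1 - Δ)) ^ (n - j + j' - 1) *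
            ((1 - Δ) * L * Δ) * (Δ * L * Δ) ^ (n' - j')) = 0 := by
  intro n n' _ _
  have hterm : ∀ i k i', (Δ * L * Δ) ^ i * (Δ * L * (1 - Δ)) * ((1 - Δ) * L * (1 - Δ)) ^ k *
      ((1 - Δ) * L * Δ) * (Δ * L * Δ) ^ i' = 0 := fun i k i' => by
    rw [mul_assoc _ (Δ * L * (1 - Δ)), mul_assoc _ (Δ * L * (1 - Δ) * _), h, mul_zero, zero_mul]
  simp only [hterm, Finset.sum_const_zero, and_self,
    IsIdempotentElem.mul_pow_mul_one_sub_mul_pow_mul_eq_zero_s18 hΔ L h]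

/-- explicit product formula for `Δ L^n Δ⊥ L^{n'} Δ`, which vanishes under
the NCGD power conditions. -/
theorem explicit_product_formula (V : Type*) [AddCommGroup V] [Module ℂ V] [FiniteDimensional ℂ V]
    (L Δ : Module.End ℂ V) (hΔ : Δ * Δ = Δ)
    (h : ∀ j : ℕ, (Δ * L * (1 - Δ)) * ((1 - Δ) * L * (1 - Δ)) ^ j * ((1 - Δ) * L * Δ) = 0) :
    ∀ n n' : ℕ, 1 ≤ n → 1 ≤ n' →
      Δ * L ^ n * (1 - Δ) * L ^ n' * Δ =
        (∑ j ∈ Finset.Icc 1 n, ∑ j' ∈ Finset.Icc 1 n',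
          (Δ * L * Δ) ^ (j - 1) * (Δ * L * (1 - Δ)) *
            ((1 - Δ) * L * (1 - Δ)) ^ (n - j + j' - 1) *
            ((1 - Δ) * L * Δ) * (Δ * L * Δ) ^ (n' - j')) ∧
      (∑ j ∈ Finset.Icc 1 n, ∑ j' ∈ Finset.Icc 1 n',
          (Δ * L * Δ) ^ (j - 1) * (Δ * L * (1 - Δ)) *
            ((1 - Δ) * L * (1 - Δ)) ^ (n - j + j' - 1) *
            ((1 - Δ) * L * Δ) * (Δ * L * Δ) ^ (n' - j')) = 0 :=
  explicit_product_formula_general V L Δ hΔ h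
end
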